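/- arXiv:2407.05344 — 7 statements merged into one kernel-verified Lean document; each statement's English description precedes it below -/
import Mathlib

section
/- If q is squarefree, r divides q, and s, t are two distinct reduced fractions with denominator q/r in ℝ/ℤ, then the translates Q'_r + s and Q'_r + t are disjoint, where Q'_r is the set of reduced fractions with denominator r in ℝ/ℤ. -/
open Pointwise

/-- The set of reduced fractions with denominator `s` in `ℝ/ℤ`. -/
def reducedFractions (s : ℕ) : Set UnitAddCircle :=
  {x | ∃ a : ℕ, a < s ∧ Nat.gcd a s = 1 ∧ x = ((a : ℝ) / (s : ℝ) : ℝ)}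

theorem stmt1 (q r : ℕ) (hq : Squarefree q) (hdvd : r ∣ q)
    (s t : UnitAddCircle) (hs : s ∈ reducedFractions (q / r))
    (ht : t ∈ reducedFractions (q / r)) (hst : s ≠ t) :
    Disjoint (reducedFractions r + {s}) (reducedFractions r + {t}) := by
  obtain ⟨a, ha, hag, hsa⟩ := hs
  obtain ⟨b, hb, hbg, htb⟩ := ht
  set m := q / r with hm
  have hrm : r * m = q := Nat.mul_div_cancel' hdvd
  have hsf : Squarefree (r * m) := hrm ▸ hq
  obtain ⟨hcop, hrsf, hmsf⟩ := Nat.squarefree_mul_iff.mp hsf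
  have hr0 : (r : ℝ) ≠ 0 := Nat.cast_ne_zero.mpr hrsf.ne_zero
  have hm0 : (m : ℝ) ≠ 0 := Nat.cast_ne_zero.mpr hmsf.ne_zero
  rw [Set.disjoint_left]
  rintro x hx1 hx2
  simp only [Set.add_singleton, Set.mem_image] at hx1 hx2
  obtain ⟨u, ⟨c, hc, hcg, hu⟩, rfl⟩ := hx1
  obtain ⟨v, ⟨d, hd, hdg, hv⟩, hx⟩ := hx2
  rw [hu, hv, hsa, htb] at hx
  have hx' : (((c : ℝ) / r + a / m : ℝ) : UnitAddCircle)
      = (((d : ℝ) / r + b / m : ℝ) : UnitAddCircle) := by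
    push_cast [AddCircle.coe_add] at hx ⊢
    exact hx.symm
  obtain ⟨k, hk⟩ := AddSubgroup.mem_zmultiples_iff.mp (QuotientAddGroup.eq.mp hx')
  rw [zsmul_eq_mul, mul_one] at hk
  have key : (d : ℤ) * m + b * r - (c * m + a * r) = k * (r * m) := by
    have h2 : ((d : ℝ) * m + b * r - (c * m + a * r)) = k * (r * m) := by
      field_simp at hk
      nlinarith [hk]
    exact_mod_cast h2
  have hdvd' : (m : ℤ) ∣ ((b : ℤ) - a) * r := ⟨k * r + c - d, by linarith [key]⟩
  have hcop' : IsCoprime (m : ℤ) (r : ℤ) := by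
    rw [Int.isCoprime_iff_gcd_eq_one]
    exact_mod_cast hcop.symm
  have hdvd'' : (m : ℤ) ∣ (b : ℤ) - a := hcop'.dvd_of_dvd_mul_right hdvd'
  have hab : (b : ℤ) - a = 0 := Int.eq_zero_of_abs_lt_dvd hdvd''
    (abs_sub_lt_iff.mpr ⟨by omega, by omega⟩)
  have hab' : a = b := by omega
  exact hst (by rw [hsa, htb, hab'])
end

section
/- For every integer m ≥ 3 there is a constant C (depending only on m) such that for all positive integers q, ∑_{r=1}^{q} φ(gcd(q,r))^m ≤ C · φ(q)^m. -/
/-!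
Exactly φ(q / d) of the r ∈ [1, q] have gcd(q, r) = d, so the sum is ∑_{d ∣ q} φ(q / d) φ(d)^m.
Super-multiplicativity φ(d) φ(q / d) ≤ φ(q) bounds each term by φ(q)^m / φ(q / d)^(m - 1), and
m - 1 ≥ 2 leaves C = ∑_n φ(n)^(-2). This series converges because n / φ(n) ≤ ω(n) + 1 and
(ω(n) + 1)^4 ≤ 49 · 2^ω(n) ≤ 49 n, whence φ(n)^2 ≥ n^(3/2) / 7.
-/

open Finset

theorem Finset.prod_le_card_add_one_mul_prod_sub_one (s : Finset ℕ) (hs : ∀ p ∈ s, 2 ≤ p) :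
    ∏ p ∈ s, p ≤ (#s + 1) * ∏ p ∈ s, (p - 1) := by
  induction s using Finset.induction_on_max with
  | empty => simp
  | insert a s hlt ih =>
    have ha : a ∉ s := fun h => (hlt a h).false
    have hcard : #s + 2 ≤ a := by
      have hsub : s ⊆ Ico 2 a := fun x hx =>
        mem_Ico.2 ⟨hs x (mem_insert_of_mem hx), hlt x hx⟩
      have := card_le_card hsub
      have := hs a (mem_insert_self a s)
      simp only [Nat.card_Ico] at *
      omega
    rw [prod_insert ha, prod_insert ha, card_insert_of_notMem ha]
    have ih := ih fun p hp => hs p (mem_insert_of_mem hp)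
    calc a * ∏ p ∈ s, p ≤ a * ((#s + 1) * ∏ p ∈ s, (p - 1)) := Nat.mul_le_mul_left a ih
      _ = a * (#s + 1) * ∏ p ∈ s, (p - 1) := by ring
      _ ≤ (#s + 1 + 1) * (a - 1) * ∏ p ∈ s, (p - 1) := by
        refine Nat.mul_le_mul_right _ ?_
        obtain ⟨b, rfl⟩ : ∃ b, a = b + 1 := ⟨a - 1, by omega⟩
        rw [Nat.add_sub_cancel]
        nlinarith
      _ = (#s + 1 + 1) * ((a - 1) * ∏ p ∈ s, (p - 1)) := by ring

namespace Nat

theorem le_card_primeFactors_add_one_mul_totient (n : ℕ) :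
    n ≤ (#n.primeFactors + 1) * φ n := by
  have hpos : 0 < ∏ p ∈ n.primeFactors, (p - 1) :=
    prod_pos fun _ hp => Nat.sub_pos_of_lt (prime_of_mem_primeFactors hp).one_lt
  refine Nat.le_of_mul_le_mul_right ?_ hpos
  calc n * ∏ p ∈ n.primeFactors, (p - 1) = φ n * ∏ p ∈ n.primeFactors, p :=
        (totient_mul_prod_primeFactors n).symm
    _ ≤ φ n * ((#n.primeFactors + 1) * ∏ p ∈ n.primeFactors, (p - 1)) :=
        Nat.mul_le_mul_left _ (prod_le_card_add_one_mul_prod_sub_one _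
          fun p hp => (prime_of_mem_primeFactors hp).two_le)
    _ = (#n.primeFactors + 1) * φ n * ∏ p ∈ n.primeFactors, (p - 1) := by ring

theorem two_pow_card_primeFactors_le {n : ℕ} (hn : n ≠ 0) : 2 ^ #n.primeFactors ≤ n :=
  calc 2 ^ #n.primeFactors ≤ ∏ p ∈ n.primeFactors, p :=
        pow_card_le_prod _ _ _ fun _ hp => (prime_of_mem_primeFactors hp).two_le
    _ ≤ n := le_of_dvd (Nat.pos_of_ne_zero hn) (prod_primeFactors_dvd n)

theorem add_one_pow_four_le_forty_nine_mul_two_pow (k : ℕ) : (k + 1) ^ 4 ≤ 49 * 2 ^ k := by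
  induction k with
  | zero => norm_num
  | succ k ih =>
    rcases lt_or_ge k 5 with hk | hk
    · interval_cases k <;> norm_num
    · have hstep : (k + 1 + 1) ^ 4 ≤ 2 * (k + 1) ^ 4 := by
        obtain ⟨t, rfl⟩ := Nat.exists_eq_add_of_le hk
        ring_nf
        nlinarith [Nat.zero_le t]
      rw [pow_succ 2 k]
      omega

theorem pow_three_le_forty_nine_mul_totient_pow_four (n : ℕ) : n ^ 3 ≤ 49 * φ n ^ 4 := by
  rcases eq_or_ne n 0 with rfl | hn
  · simp
  refine Nat.le_of_mul_le_mul_left ?_ (Nat.pos_of_ne_zero hn)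
  calc n * n ^ 3 = n ^ 4 := by ring
    _ ≤ ((#n.primeFactors + 1) * φ n) ^ 4 :=
        Nat.pow_le_pow_left (le_card_primeFactors_add_one_mul_totient n) 4
    _ = (#n.primeFactors + 1) ^ 4 * φ n ^ 4 := mul_pow ..
    _ ≤ 49 * n * φ n ^ 4 := by
        gcongr
        exact (add_one_pow_four_le_forty_nine_mul_two_pow _).trans
          (Nat.mul_le_mul_left 49 (two_pow_card_primeFactors_le hn))
    _ = n * (49 * φ n ^ 4) := by ring

theorem summable_inv_totient_sq : Summable fun n : ℕ => ((φ n : ℝ) ^ 2)⁻¹ := by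
  refine ((Real.summable_nat_rpow_inv.2 (by norm_num : (1 : ℝ) < 3 / 2)).mul_left 7).of_nonneg_of_le
    (fun n => by positivity) fun n => ?_
  rcases eq_or_ne n 0 with rfl | hn
  · simp
  have hφ : (0 : ℝ) < φ n := by exact_mod_cast totient_pos.2 (Nat.pos_of_ne_zero hn)
  have hle : (n : ℝ) ^ (3 / 2 : ℝ) ≤ 7 * (φ n : ℝ) ^ 2 := by
    refine (pow_le_pow_iff_left₀ (by positivity) (by positivity) two_ne_zero).1 ?_
    rw [← Real.rpow_natCast, ← Real.rpow_mul (Nat.cast_nonneg n)]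
    norm_num
    linarith [show (n : ℝ) ^ 3 ≤ 49 * (φ n : ℝ) ^ 4 by
      exact_mod_cast pow_three_le_forty_nine_mul_totient_pow_four n]
  calc ((φ n : ℝ) ^ 2)⁻¹ = 7 * (7 * (φ n : ℝ) ^ 2)⁻¹ := by field_simp
    _ ≤ 7 * ((n : ℝ) ^ (3 / 2 : ℝ))⁻¹ := by
      gcongr

theorem sum_range_gcd_eq_sum_divisors {M : Type*} [AddCommMonoid M] (n : ℕ) (f : ℕ → M) :
    ∑ k ∈ range n, f (n.gcd k) = ∑ d ∈ n.divisors, φ (n / d) • f d := by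
  rcases eq_or_ne n 0 with rfl | hn
  · simp
  rw [← sum_fiberwise_of_maps_to (t := n.divisors) (g := n.gcd)
    fun k _ => mem_divisors.2 ⟨gcd_dvd_left n k, hn⟩]
  refine sum_congr rfl fun d hd => ?_
  rw [totient_div_of_dvd (dvd_of_mem_divisors hd), ← sum_const]
  exact sum_congr rfl fun k hk => by rw [(mem_filter.1 hk).2]

theorem sum_Icc_gcd_eq_sum_range {M : Type*} [AddCancelCommMonoid M] (n : ℕ) (f : ℕ → M) :
    ∑ r ∈ Icc 1 n, f (n.gcd r) = ∑ k ∈ range n, f (n.gcd k) := by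
  have h := (sum_range_succ' (fun k => f (n.gcd k)) n).symm.trans
    (sum_range_succ (fun k => f (n.gcd k)) n)
  rw [gcd_zero_right, gcd_self, add_left_inj] at h
  rw [← h, ← Ico_add_one_right_eq_Icc, sum_Ico_eq_sum_range, Nat.add_sub_cancel]
  simp only [add_comm 1]

theorem totient_pow_mul_totient_div_pow_le {n d k m : ℕ} (hd : d ∣ n) (hn : n ≠ 0) (hkm : k ≤ m) :
    φ d ^ m * φ (n / d) ^ k ≤ φ n ^ m :=
  calc φ d ^ m * φ (n / d) ^ k ≤ φ d ^ m * φ (n / d) ^ m := by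
        gcongr
        exact totient_pos.2 (Nat.div_pos (le_of_dvd (Nat.pos_of_ne_zero hn) hd)
          (Nat.pos_of_dvd_of_pos hd (Nat.pos_of_ne_zero hn)))
    _ = (φ d * φ (n / d)) ^ m := (mul_pow ..).symm
    _ ≤ φ (d * (n / d)) ^ m := by gcongr; exact totient_super_multiplicative d (n / d)
    _ = φ n ^ m := by rw [Nat.mul_div_cancel' hd]

theorem sum_Icc_totient_gcd_pow_le {m : ℕ} (hm : 3 ≤ m) (q : ℕ) :
    ∑ r ∈ Icc 1 q, (φ (q.gcd r) : ℝ) ^ m ≤ (∑' n : ℕ, ((φ n : ℝ) ^ 2)⁻¹) * (φ q : ℝ) ^ m := by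
  calc ∑ r ∈ Icc 1 q, (φ (q.gcd r) : ℝ) ^ m = ∑ d ∈ q.divisors, φ (q / d) • (φ d : ℝ) ^ m := by
        rw [sum_Icc_gcd_eq_sum_range q fun g => (φ g : ℝ) ^ m,
          sum_range_gcd_eq_sum_divisors q fun g => (φ g : ℝ) ^ m]
    _ ≤ ∑ d ∈ q.divisors, (φ q : ℝ) ^ m * ((φ (q / d) : ℝ) ^ 2)⁻¹ := by
        refine sum_le_sum fun d hd => ?_
        have hq := (mem_divisors.1 hd).2
        have hpos : (0 : ℝ) < φ (q / d) := by
          exact_mod_cast totient_pos.2 (Nat.div_pos (divisor_le hd) (pos_of_mem_divisors hd))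
        rw [nsmul_eq_mul, le_mul_inv_iff₀ (by positivity)]
        calc (φ (q / d) : ℝ) * (φ d : ℝ) ^ m * (φ (q / d) : ℝ) ^ 2
            = ((φ d ^ m * φ (q / d) ^ 3 : ℕ) : ℝ) := by push_cast; ring
          _ ≤ (φ q : ℝ) ^ m := by
            exact_mod_cast totient_pow_mul_totient_div_pow_le (dvd_of_mem_divisors hd) hq hm
    _ = (φ q : ℝ) ^ m * ∑ e ∈ q.divisors, ((φ e : ℝ) ^ 2)⁻¹ := by
        rw [← mul_sum, sum_div_divisors q fun e => ((φ e : ℝ) ^ 2)⁻¹]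
    _ ≤ (φ q : ℝ) ^ m * ∑' n : ℕ, ((φ n : ℝ) ^ 2)⁻¹ := by
        gcongr
        exact summable_inv_totient_sq.sum_le_tsum _ fun n _ => by positivity
    _ = _ := mul_comm ..

end Nat

theorem stmt4 (m : ℕ) (hm : 3 ≤ m) :
    ∃ C : ℝ, 0 < C ∧ ∀ q : ℕ, 0 < q →
      (∑ r ∈ Finset.Icc 1 q, (Nat.totient (Nat.gcd q r) : ℝ) ^ m) ≤
        C * (Nat.totient q : ℝ) ^ m :=
  ⟨_, Nat.summable_inv_totient_sq.tsum_pos (fun _ => by positivity) 1 (by simp),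
    fun q _ => Nat.sum_Icc_totient_gcd_pow_le hm q⟩
end

section
/- Let m ≥ 1, ψ : ℕ → [0,∞), and (y_q) a sequence in ℝ^m. Define A_q ⊆ [0,1)^m as the set of x with |qx − a − y_q|_∞ < ψ(q) for some a ∈ ℤ^m with gcd(a_i, q) = 1 for all i. If ∑_{q≥1} (φ(q) ψ(q) / q)^m < ∞, then the set of x ∈ [0,1)^m lying in infinitely many A_q has m-dimensional Lebesgue measure zero. -/
open MeasureTheory
open scoped ENNReal

lemma gcd_shift (q : ℕ) (a k : ℤ) : Int.gcd (a + (q:ℤ) * k) q = 1 ↔ Int.gcd a q = 1 := by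
  rw [← Int.isCoprime_iff_gcd_eq_one, ← Int.isCoprime_iff_gcd_eq_one,
    IsCoprime.add_mul_left_left_iff]

lemma count_coprime (q : ℕ) (hq : 0 < q) (n : ℤ) :
    ((Finset.Ico n (n + (q:ℤ))).filter (fun a => Int.gcd a q = 1)).card = q.totient := by
  have hq' : (0:ℤ) < q := by exact_mod_cast hq
  rw [Nat.totient]
  apply Finset.card_bij' (fun a _ => (a % (q:ℤ)).toNat)
    (fun k _ => n + (((k:ℤ) - n) % q))
  · intro a ha
    simp only [Finset.mem_filter, Finset.mem_Ico] at ha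
    obtain ⟨⟨h1, h2⟩, hg⟩ := ha
    have e1 : 0 ≤ a % (q:ℤ) := Int.emod_nonneg a hq'.ne'
    have e2 : a % (q:ℤ) < q := Int.emod_lt_of_pos a hq'
    simp only [Finset.mem_filter, Finset.mem_range]
    constructor
    · omega
    · have key : Int.gcd (a % (q:ℤ)) q = 1 := by
        have : a % (q:ℤ) = a + (q:ℤ) * (-(a / q)) := by
          rw [Int.emod_def]; ring
        rw [this, gcd_shift]; exact hg
      have : ((a % (q:ℤ)).toNat : ℤ) = a % (q:ℤ) := Int.toNat_of_nonneg e1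
      rw [Nat.Coprime, Nat.gcd_comm, ← Int.gcd_natCast_natCast, this]
      exact key
  · intro k hk
    simp only [Finset.mem_filter, Finset.mem_range] at hk
    obtain ⟨h1, h2⟩ := hk
    have e1 : 0 ≤ ((k:ℤ) - n) % q := Int.emod_nonneg _ hq'.ne'
    have e2 : ((k:ℤ) - n) % q < q := Int.emod_lt_of_pos _ hq'
    simp only [Finset.mem_filter, Finset.mem_Ico]
    refine ⟨⟨by omega, by omega⟩, ?_⟩
    have : n + ((k:ℤ) - n) % q = (k:ℤ) + (q:ℤ) * (-(((k:ℤ) - n) / q)) := by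
      rw [Int.emod_def]; ring
    rw [this, gcd_shift, Int.gcd_natCast_natCast]
    exact Nat.coprime_comm.mp h2
  · intro a ha
    simp only [Finset.mem_filter, Finset.mem_Ico] at ha
    obtain ⟨⟨h1, h2⟩, _⟩ := ha
    have e1 : 0 ≤ a % (q:ℤ) := Int.emod_nonneg a hq'.ne'
    have hcast : ((a % (q:ℤ)).toNat : ℤ) = a % (q:ℤ) := Int.toNat_of_nonneg e1
    rw [hcast]
    have : (a % (q:ℤ) - n) % q = (a - n) % q := by
      conv_rhs => rw [Int.sub_emod, ← Int.emod_emod_of_dvd a (dvd_refl (q:ℤ)), ← Int.sub_emod]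
    rw [this, Int.emod_eq_of_lt (by omega) (by omega)]
    omega
  · intro k hk
    simp only [Finset.mem_filter, Finset.mem_range] at hk
    have : (n + ((k:ℤ) - n) % q) % q = (k:ℤ) % q := by
      conv_lhs => rw [Int.add_emod, Int.emod_emod_of_dvd _ (dvd_refl (q:ℤ)), ← Int.add_emod]
      ring_nf
    rw [this, Int.emod_eq_of_lt (by positivity) (by exact_mod_cast hk.1)]
    omega

lemma count_coprime2 (q : ℕ) (hq : 0 < q) (n : ℤ) :
    ((Finset.Ico n (n + 2*(q:ℤ))).filter (fun a => Int.gcd a q = 1)).card = 2 * q.totient := by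
  have hq' : (0:ℤ) < q := by exact_mod_cast hq
  have hsplit : Finset.Ico n (n + 2*(q:ℤ)) =
      Finset.Ico n (n + (q:ℤ)) ∪ Finset.Ico (n + (q:ℤ)) (n + (q:ℤ) + q) := by
    rw [Finset.Ico_union_Ico_eq_Ico (by omega) (by omega)]
    congr 1; ring
  rw [hsplit, Finset.filter_union,
    Finset.card_union_of_disjoint
      (Finset.disjoint_filter_filter (Finset.Ico_disjoint_Ico_consecutive _ _ _)),
    count_coprime q hq n, count_coprime q hq (n + q)]
  ring

lemma vol_bound (m : ℕ) (q : ℕ) (hq : 1 ≤ q) (ψq : ℝ) (hψq : 0 ≤ ψq)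
    (yq : Fin m → ℝ) :
    volume {x : Fin m → ℝ | (∀ i, x i ∈ Set.Ico (0 : ℝ) 1) ∧
      ∃ a : Fin m → ℤ, (∀ i, Int.gcd (a i) q = 1) ∧
        ∀ i, |(q : ℝ) * x i - (a i : ℝ) - yq i| < ψq} ≤
      ENNReal.ofReal ((4 * q.totient * ψq / q) ^ m) := by
  have hq0 : (0:ℝ) < q := by exact_mod_cast hq
  have hφ : 1 ≤ (q.totient : ℝ) := by exact_mod_cast Nat.totient_pos.mpr hq
  by_cases hsmall : 2 * ψq < q
  · set n : Fin m → ℤ := fun i => ⌈-yq i - ψq⌉ with hn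
    set S : Fin m → Finset ℤ :=
      fun i => (Finset.Ico (n i) (n i + 2*(q:ℤ))).filter (fun a => Int.gcd a q = 1) with hS
    have hsub : {x : Fin m → ℝ | (∀ i, x i ∈ Set.Ico (0 : ℝ) 1) ∧
        ∃ a : Fin m → ℤ, (∀ i, Int.gcd (a i) q = 1) ∧
          ∀ i, |(q : ℝ) * x i - (a i : ℝ) - yq i| < ψq} ⊆
        ⋃ a ∈ Fintype.piFinset S, Set.pi Set.univ
          (fun i => Set.Ioo (((a i : ℝ) + yq i - ψq)/q) (((a i : ℝ) + yq i + ψq)/q)) := by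
      rintro x ⟨hx, a, hcop, hdist⟩
      refine Set.mem_iUnion₂.mpr ⟨a, ?_, ?_⟩
      · rw [Fintype.mem_piFinset]
        intro i
        have h1 := (abs_lt.mp (hdist i)).1
        have h2 := (abs_lt.mp (hdist i)).2
        have hx1 : (0:ℝ) ≤ x i := (hx i).1
        have hx2 : x i < 1 := (hx i).2
        have hl : (-yq i - ψq : ℝ) ≤ (a i : ℝ) := by nlinarith
        have hu : ((a i : ℝ)) < (n i : ℝ) + 2 * q := by
          have hce : (-yq i - ψq : ℝ) ≤ ((n i : ℤ) : ℝ) := by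
            simp only [hn]; exact Int.le_ceil _
          nlinarith
        rw [hS, Finset.mem_filter, Finset.mem_Ico]
        refine ⟨⟨Int.ceil_le.mpr hl, ?_⟩, hcop i⟩
        exact_mod_cast (by push_cast; exact hu : ((a i : ℝ)) < ((n i + 2*(q:ℤ) : ℤ) : ℝ))
      · intro i _
        have h1 := (abs_lt.mp (hdist i)).1
        have h2 := (abs_lt.mp (hdist i)).2
        constructor
        · rw [div_lt_iff₀ hq0]; nlinarith
        · rw [lt_div_iff₀ hq0]; nlinarith
    calc volume _ ≤ ∑ a ∈ Fintype.piFinset S, volume (Set.pi Set.univ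
          (fun i => Set.Ioo (((a i : ℝ) + yq i - ψq)/q) (((a i : ℝ) + yq i + ψq)/q))) :=
        le_trans (measure_mono hsub) (measure_biUnion_finset_le _ _)
      _ = (Fintype.piFinset S).card * ENNReal.ofReal (2 * ψq / q) ^ m := by
        rw [Finset.sum_congr rfl (fun a _ => ?_), Finset.sum_const, nsmul_eq_mul]
        rw [volume_pi_pi]
        have : ∀ i : Fin m, volume (Set.Ioo (((a i : ℝ) + yq i - ψq)/q) (((a i : ℝ) + yq i + ψq)/q))
            = ENNReal.ofReal (2 * ψq / q) := by
          intro i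
          rw [Real.volume_Ioo, div_sub_div_same]
          congr 1; ring
        simp [this]
      _ ≤ ENNReal.ofReal ((4 * q.totient * ψq / q) ^ m) := by
        have hcard : (Fintype.piFinset S).card = (2 * q.totient) ^ m := by
          rw [Fintype.card_piFinset]
          simp [hS, count_coprime2 q hq]
        rw [hcard]
        rw [← ENNReal.ofReal_pow (by positivity), ← ENNReal.ofReal_natCast,
          ← ENNReal.ofReal_mul (by positivity)]
        apply ENNReal.ofReal_le_ofReal
        apply le_of_eq
        push_cast
        rw [← mul_pow]
        congr 1
        field_simp
        ring
  · push_neg at hsmall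
    calc volume {x : Fin m → ℝ | (∀ i, x i ∈ Set.Ico (0 : ℝ) 1) ∧
        ∃ a : Fin m → ℤ, (∀ i, Int.gcd (a i) q = 1) ∧
          ∀ i, |(q : ℝ) * x i - (a i : ℝ) - yq i| < ψq}
        ≤ volume (Set.pi Set.univ (fun _ : Fin m => Set.Ico (0:ℝ) 1)) := by
          apply measure_mono
          rintro x ⟨hx, -⟩ i -
          exact hx i
      _ = 1 := by simp [volume_pi_pi]
      _ ≤ ENNReal.ofReal ((4 * q.totient * ψq / q) ^ m) := by
        rw [← ENNReal.ofReal_one]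
        apply ENNReal.ofReal_le_ofReal
        apply one_le_pow₀
        rw [le_div_iff₀ hq0]
        nlinarith

theorem stmt10 (m : ℕ) (hm : 1 ≤ m) (ψ : ℕ → ℝ) (hψ : ∀ q, 0 ≤ ψ q)
    (y : ℕ → (Fin m → ℝ))
    (A : ℕ → Set (Fin m → ℝ))
    (hA : ∀ q, A q = {x | (∀ i, x i ∈ Set.Ico (0 : ℝ) 1) ∧
      ∃ a : Fin m → ℤ, (∀ i, Int.gcd (a i) q = 1) ∧
        ∀ i, |(q : ℝ) * x i - (a i : ℝ) - y q i| < ψ q})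
    (hsum : Summable (fun q : ℕ => ((Nat.totient q : ℝ) * ψ q / q) ^ m)) :
    volume {x : Fin m → ℝ | {q : ℕ | x ∈ A q}.Infinite} = 0 := by
  have hset : {x : Fin m → ℝ | {q : ℕ | x ∈ A q}.Infinite}
      = {x : Fin m → ℝ | ∃ᶠ q in Filter.atTop, x ∈ A q} := by
    ext x
    simp [Nat.frequently_atTop_iff_infinite]
  rw [hset]
  apply measure_setOf_frequently_eq_zero
  have key : ∀ q : ℕ, volume {x : Fin m → ℝ | x ∈ A q} ≤
      ENNReal.ofReal ((4 * q.totient * ψ q / q) ^ m) + (if q = 0 then 1 else 0) := by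
    intro q
    rcases Nat.eq_zero_or_pos q with rfl | hq
    · simp only [if_pos rfl]
      calc volume {x : Fin m → ℝ | x ∈ A 0}
          ≤ volume (Set.pi Set.univ (fun _ : Fin m => Set.Ico (0:ℝ) 1)) := by
            apply measure_mono
            intro x hx
            rw [hA 0] at hx
            intro i _
            exact hx.1 i
        _ = 1 := by simp [volume_pi_pi]
        _ ≤ _ := le_add_self
    · rw [hA q]
      simp only [if_neg (Nat.pos_iff_ne_zero.mp hq)]
      rw [add_zero]
      exact vol_bound m q hq (ψ q) (hψ q) (y q)
  have hsum4 : Summable (fun q : ℕ => (4 * (q.totient : ℝ) * ψ q / q) ^ m) := by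
    have : (fun q : ℕ => (4 * (q.totient : ℝ) * ψ q / q) ^ m)
        = fun q : ℕ => (4:ℝ)^m * ((q.totient : ℝ) * ψ q / q) ^ m := by
      funext q
      rw [← mul_pow]
      congr 1
      ring
    rw [this]
    exact hsum.mul_left _
  have h1 : ∑' q : ℕ, ENNReal.ofReal ((4 * (q.totient:ℝ) * ψ q / q) ^ m) ≠ ⊤ := by
    rw [← ENNReal.ofReal_tsum_of_nonneg (fun q => pow_nonneg (div_nonneg (mul_nonneg (by positivity) (hψ q)) (Nat.cast_nonneg q)) m) hsum4]
    exact ENNReal.ofReal_ne_top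
  have h2 : ∑' q : ℕ, (if q = 0 then (1:ℝ≥0∞) else 0) = 1 := tsum_ite_eq 0 1
  apply ne_top_of_le_ne_top ?_ (ENNReal.tsum_le_tsum key)
  rw [ENNReal.tsum_add, h2]
  exact ENNReal.add_ne_top.mpr ⟨h1, ENNReal.one_ne_top⟩
end

section
/- Let q, r be positive integers, write ℓ for the part of gcd(q,r) built from primes appearing to equal exponent in q and r, and n for ∏_{u_p ≠ v_p} p^{max(u_p, v_p)} as above. For an integer c, the number f(c) of pairs (a,b) with a ∈ (ℤ/q)^×, b ∈ (ℤ/r)^×, and a·(r/gcd(q,r)) − b·(q/gcd(q,r)) ≡ c (mod lcm(q,r)) satisfies: f(c) = 0 unless gcd(c, n) = 1, and in that case f(c) = φ(m) · ℓ · ∏_{p ∣ gcd(ℓ,c)} (1 − 1/p) · ∏_{p ∣ ℓ, p ∤ c} (1 − 2/p), where m = ∏_{u_p ≠ v_p} p^{min(u_p,v_p)}. -/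
/-
Write `L = lcm q r`. The congruence only depends on `a mod q` and `b mod r`, and by the Chinese
remainder theorem the count is multiplicative over the prime-power components of `L`, once the
two terms are allowed to carry unit twists `s, t` (the cofactors contributed by the other
components). For a prime `p` with exponents `u ≥ v`, each `b` determines `a` uniquely. If `u > v`,
then `a` is a unit exactly when `p ∤ c`, giving `0` or `φ (p ^ v)`. If `u = v = e`, one counts the
`b` with `b` and `c + b t` both units, that is `p ^ (e - 1) (p - 1)` or `p ^ (e - 1) (p - 2)`
according as `p ∣ c` or not. The product of these local factors is the stated formula.
-/

open Finset

/-- The part of `q` built from primes occurring to equal exponent in `q` and `r`. -/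
def equalPart (q r : ℕ) : ℕ :=
  ∏ p ∈ q.primeFactors, if q.factorization p = r.factorization p
    then p ^ q.factorization p else 1

/-- `∏_{u_p ≠ v_p} p ^ min (u_p, v_p)`. -/
def minPart (q r : ℕ) : ℕ :=
  ∏ p ∈ q.primeFactors ∪ r.primeFactors, if q.factorization p ≠ r.factorization p
    then p ^ min (q.factorization p) (r.factorization p) else 1

/-- `∏_{u_p ≠ v_p} p ^ max (u_p, v_p)`. -/
def maxPart (q r : ℕ) : ℕ :=
  ∏ p ∈ q.primeFactors ∪ r.primeFactors, if q.factorization p ≠ r.factorization p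
    then p ^ max (q.factorization p) (r.factorization p) else 1

lemma card_filter_product_eq_sum {α β : Type*} (s : Finset α) (t : Finset β)
    (P : α × β → Prop) [DecidablePred P] :
    #{x ∈ s ×ˢ t | P x} = ∑ b ∈ t, #{a ∈ s | P (a, b)} := by
  simp only [card_filter, sum_product_right]

lemma card_filter_range_mul_of_periodic {n : ℕ} {P : ℕ → Prop} [DecidablePred P]
    (hP : Function.Periodic P n) (m : ℕ) :
    #{k ∈ range (m * n) | P k} = m * #{k ∈ range n | P k} := by
  simp only [← Nat.count_eq_card_filter_range]
  induction m with
  | zero => simp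
  | succ m ih =>
    have hshift : (fun k => P (m * n + k)) = P := funext fun k => by
      rw [add_comm]; exact (hP.nat_mul m) k
    rw [add_mul, one_mul, Nat.count_add, ih, add_mul, one_mul]
    simp only [hshift]

lemma sum_Icc_eq_sum_range_of_periodic {M : Type*} [AddCommMonoid M] {q : ℕ} {f : ℕ → M}
    (hf : Function.Periodic f q) : ∑ a ∈ Icc 1 q, f a = ∑ a ∈ range q, f a := by
  rcases Nat.eq_zero_or_pos q with rfl | hq
  · rfl
  rw [← Ico_add_one_right_eq_Icc, sum_Ico_succ_top hq, range_eq_Ico,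
    sum_eq_sum_Ico_succ_bot hq, hf.eq, add_comm]

lemma card_filter_Icc_product_Icc {q r : ℕ} (P : ℕ × ℕ → Prop) [DecidablePred P]
    (hP : ∀ a b, P (a % q, b % r) ↔ P (a, b)) :
    #{x ∈ Icc 1 q ×ˢ Icc 1 r | P x} = #{x ∈ range q ×ˢ range r | P x} := by
  have hPq : ∀ a b, P (a + q, b) ↔ P (a, b) := fun a b => by
    rw [← hP, Nat.add_mod_right, hP]
  have hPr : ∀ a b, P (a, b + r) ↔ P (a, b) := fun a b => by
    rw [← hP, Nat.add_mod_right, hP]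
  simp only [card_filter, sum_product]
  rw [sum_Icc_eq_sum_range_of_periodic fun a => by simp only [hPq]]
  exact sum_congr rfl fun a _ => sum_Icc_eq_sum_range_of_periodic fun b => by simp only [hPr]

lemma sum_range_mul_eq_sum_sum_mod {M : Type*} [AddCommMonoid M] {m n : ℕ} (hmn : m.Coprime n)
    (hm : m ≠ 0) (hn : n ≠ 0) (f : ℕ → ℕ → M) :
    ∑ k ∈ range (m * n), f (k % m) (k % n) = ∑ a ∈ range m, ∑ b ∈ range n, f a b := by
  rw [← sum_product']
  refine sum_nbij' (fun k => (k % m, k % n)) (fun x => Nat.chineseRemainder hmn x.1 x.2)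
    ?_ ?_ ?_ ?_ (fun _ _ => rfl)
  · intro k _
    simp only [mem_product, mem_range]
    exact ⟨Nat.mod_lt _ (Nat.pos_of_ne_zero hm), Nat.mod_lt _ (Nat.pos_of_ne_zero hn)⟩
  · intro x _
    exact mem_range.mpr (Nat.chineseRemainder_lt_mul hmn _ _ hm hn)
  · intro k hk
    have := Nat.chineseRemainder_modEq_unique hmn (Nat.mod_modEq k m).symm
      (Nat.mod_modEq k n).symm
    rwa [Nat.ModEq, Nat.mod_eq_of_lt (mem_range.mp hk),
      Nat.mod_eq_of_lt (Nat.chineseRemainder_lt_mul hmn _ _ hm hn), eq_comm] at this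
  · rintro ⟨a, b⟩ hx
    simp only [mem_product, mem_range] at hx
    obtain ⟨ha, hb⟩ := (Nat.chineseRemainder hmn a b).2
    rw [Nat.ModEq, Nat.mod_eq_of_lt hx.1] at ha
    rw [Nat.ModEq, Nat.mod_eq_of_lt hx.2] at hb
    rw [ha, hb]

lemma card_filter_range_mul_product {q₁ q₂ r₁ r₂ : ℕ} (hq : q₁.Coprime q₂) (hr : r₁.Coprime r₂)
    (hq₁ : q₁ ≠ 0) (hq₂ : q₂ ≠ 0) (hr₁ : r₁ ≠ 0) (hr₂ : r₂ ≠ 0)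
    (P₁ P₂ : ℕ × ℕ → Prop) [DecidablePred P₁] [DecidablePred P₂] :
    #{x ∈ range (q₁ * q₂) ×ˢ range (r₁ * r₂) |
        P₁ (x.1 % q₁, x.2 % r₁) ∧ P₂ (x.1 % q₂, x.2 % r₂)} =
      #{x ∈ range q₁ ×ˢ range r₁ | P₁ x} * #{x ∈ range q₂ ×ˢ range r₂ | P₂ x} := by
  set F : ℕ → ℕ → ℕ → ℕ → ℕ := fun a₁ a₂ b₁ b₂ =>
    (if P₁ (a₁, b₁) then 1 else 0) * if P₂ (a₂, b₂) then 1 else 0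
  calc _ = ∑ a ∈ range (q₁ * q₂), ∑ b ∈ range (r₁ * r₂),
          F (a % q₁) (a % q₂) (b % r₁) (b % r₂) := by
        simp only [card_filter, sum_product, F, ite_zero_mul_ite_zero, mul_one]
    _ = ∑ a₁ ∈ range q₁, ∑ a₂ ∈ range q₂, ∑ b₁ ∈ range r₁, ∑ b₂ ∈ range r₂, F a₁ a₂ b₁ b₂ := by
        simp only [sum_range_mul_eq_sum_sum_mod hr hr₁ hr₂, sum_range_mul_eq_sum_sum_mod hq hq₁ hq₂
          (fun a₁ a₂ => ∑ b₁ ∈ range r₁, ∑ b₂ ∈ range r₂, F a₁ a₂ b₁ b₂)]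
    _ = _ := by
        simp only [card_filter, sum_product, sum_mul_sum, F]

lemma filter_mul_modEq_eq_singleton {n : ℕ} [NeZero n] {s : ℤ} (hs : IsCoprime s n) (x : ℤ) :
    ∃ a₀, {a ∈ range n | ((a : ℕ) : ℤ) * s ≡ x [ZMOD n]} = {a₀} := by
  obtain ⟨u, hu⟩ := (ZMod.coe_int_isUnit_iff_isCoprime s n).mpr hs.symm
  refine ⟨((x : ZMod n) * ↑u⁻¹).val, ?_⟩
  ext a
  simp only [mem_filter, mem_range, mem_singleton, ← ZMod.intCast_eq_intCast_iff]
  push_cast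
  rw [← hu, ← Units.eq_mul_inv_iff_mul_eq]
  constructor
  · rintro ⟨ha, h⟩
    rw [← h, ZMod.val_cast_of_lt ha]
  · rintro rfl
    exact ⟨ZMod.val_lt _, ZMod.natCast_zmod_val _⟩

lemma card_filter_coprime_mul_modEq {n : ℕ} [NeZero n] {s : ℤ} (hs : IsCoprime s n) (x : ℤ) :
    #{a ∈ range n | a.Coprime n ∧ ((a : ℕ) : ℤ) * s ≡ x [ZMOD n]} =
      if IsCoprime x n then 1 else 0 := by
  obtain ⟨a₀, h⟩ := filter_mul_modEq_eq_singleton hs x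
  have hx : a₀ ∈ {a ∈ range n | ((a : ℕ) : ℤ) * s ≡ x [ZMOD n]} := h ▸ mem_singleton_self a₀
  have key : a₀.Coprime n ↔ IsCoprime x n := by
    rw [← ZMod.isUnit_iff_coprime, isCoprime_comm, ← ZMod.coe_int_isUnit_iff_isCoprime,
      ← (ZMod.intCast_eq_intCast_iff _ _ _).mpr (mem_filter.mp hx).2]
    push_cast
    rw [IsUnit.mul_iff, and_iff_left ((ZMod.coe_int_isUnit_iff_isCoprime s n).mpr hs.symm)]
  simp_rw [and_comm (a := Nat.Coprime _ _), ← filter_filter, h, filter_singleton, key]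
  split_ifs <;> rfl

lemma isCoprime_prime_pow_iff {p e : ℕ} (hp : p.Prime) (he : e ≠ 0) (x : ℤ) :
    IsCoprime x (p ^ e : ℕ) ↔ ¬ (p : ℤ) ∣ x := by
  rw [Nat.cast_pow, IsCoprime.pow_right_iff (Nat.pos_of_ne_zero he), isCoprime_comm,
    (Nat.prime_iff_prime_int.mp hp).irreducible.coprime_iff_not_dvd]

lemma card_filter_coprime_add_mul_of_prime {p : ℕ} (hp : p.Prime) {t : ℤ} (ht : IsCoprime t p)
    (c : ℤ) :
    #{b ∈ range p | b.Coprime p ∧ IsCoprime (c + ((b : ℕ) : ℤ) * t) p} =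
      if (p : ℤ) ∣ c then p - 1 else p - 2 := by
  have : NeZero p := ⟨hp.ne_zero⟩
  have hsplit := card_filter_add_card_filter_not
    (s := {b ∈ range p | b.Coprime p}) (fun b : ℕ => IsCoprime (c + (b : ℤ) * t) p)
  have hbad : ∀ b : ℕ, ¬ IsCoprime (c + (b : ℤ) * t) p ↔ (b : ℤ) * t ≡ -c [ZMOD p] := by
    intro b
    rw [isCoprime_comm, (Nat.prime_iff_prime_int.mp hp).irreducible.coprime_iff_not_dvd, not_not,
      Int.modEq_iff_dvd, ← neg_add', dvd_neg]
  have htot : #{b ∈ range p | b.Coprime p} = p - 1 := by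
    rw [← Nat.totient_prime hp, Nat.totient_eq_card_coprime]
    simp_rw [Nat.coprime_comm]
  have hc : IsCoprime (-c) p ↔ ¬ (p : ℤ) ∣ c := by
    rw [IsCoprime.neg_left_iff, isCoprime_comm,
      (Nat.prime_iff_prime_int.mp hp).irreducible.coprime_iff_not_dvd]
  simp only [filter_filter, hbad, card_filter_coprime_mul_modEq ht, htot, hc] at hsplit
  have := hp.two_le
  split_ifs at hsplit ⊢ <;> omega

lemma natCast_mod_mul_div_modEq {q L : ℕ} (h : q ∣ L) (a : ℕ) :
    ((a % q : ℕ) : ℤ) * (L / q : ℕ) ≡ a * (L / q : ℕ) [ZMOD L] := by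
  have := (Int.mod_modEq (a : ℤ) q).mul_right' (c := ((L / q : ℕ) : ℤ))
  rwa [← Nat.cast_mul, Nat.mul_div_cancel' h, ← Int.natCast_mod] at this

lemma twistedDiff_mul_modEq {q r L M N : ℕ} (hq : q ∣ L) (hr : r ∣ L) (a b : ℕ) (s t : ℤ) :
    (a : ℤ) * s * (L / q * M : ℕ) - b * t * (L / r * N : ℕ) ≡
      ((a % q : ℕ) : ℤ) * (s * M) * (L / q : ℕ) - ((b % r : ℕ) : ℤ) * (t * N) * (L / r : ℕ)
        [ZMOD L] := by
  have ha := ((natCast_mod_mul_div_modEq hq a).mul_right (s * M)).symm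
  have hb := ((natCast_mod_mul_div_modEq hr b).mul_right (t * N)).symm
  convert ha.sub hb using 1 <;> push_cast <;> ring

lemma lcm_mul_mul_of_coprime {q₁ q₂ r₁ r₂ : ℕ} (h : (q₁.lcm r₁).Coprime (q₂.lcm r₂)) :
    (q₁ * q₂).lcm (r₁ * r₂) = q₁.lcm r₁ * q₂.lcm r₂ := by
  refine Nat.dvd_antisymm (Nat.lcm_dvd ?_ ?_) (h.mul_dvd_of_dvd_of_dvd ?_ ?_)
  · exact mul_dvd_mul (Nat.dvd_lcm_left _ _) (Nat.dvd_lcm_left _ _)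
  · exact mul_dvd_mul (Nat.dvd_lcm_right _ _) (Nat.dvd_lcm_right _ _)
  · exact Nat.lcm_dvd ((dvd_mul_right q₁ q₂).trans (Nat.dvd_lcm_left _ _))
      ((dvd_mul_right r₁ r₂).trans (Nat.dvd_lcm_right _ _))
  · exact Nat.lcm_dvd ((dvd_mul_left q₂ q₁).trans (Nat.dvd_lcm_left _ _))
      ((dvd_mul_left r₂ r₁).trans (Nat.dvd_lcm_right _ _))

lemma lcm_div_left_eq_div_gcd {q : ℕ} (hq : q ≠ 0) (r : ℕ) : q.lcm r / q = r / q.gcd r := by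
  rw [Nat.lcm, Nat.mul_div_assoc q (Nat.gcd_dvd_right q r),
    Nat.mul_div_cancel_left _ (Nat.pos_of_ne_zero hq)]

lemma coprime_prod_prime_pow {a : ℕ} (ha : a.Prime) {S : Finset ℕ} (hS : ∀ p ∈ S, p.Prime)
    (haS : a ∉ S) (e : ℕ → ℕ) : a.Coprime (∏ p ∈ S, p ^ e p) :=
  Nat.Coprime.prod_right fun p hp =>
    ((Nat.coprime_primes ha (hS p hp)).mpr fun h => haS (h ▸ hp)).pow_right _

lemma isCoprime_mul_lcm_div {s : ℤ} {p q r d : ℕ} (hs : IsCoprime s p) (hqr : (q * r).Coprime p)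
    (hd : d ∣ q.lcm r) : IsCoprime (s * (q.lcm r / d : ℕ)) p :=
  hs.mul_left <| Nat.isCoprime_iff_coprime.mpr <|
    hqr.coprime_dvd_left ((Nat.div_dvd_of_dvd hd).trans (Nat.lcm_dvd_mul q r))

lemma primeFactors_prod_prime_pow {S : Finset ℕ} (hS : ∀ p ∈ S, p.Prime) {e : ℕ → ℕ}
    (he : ∀ p ∈ S, e p ≠ 0) : (∏ p ∈ S, p ^ e p).primeFactors = S := by
  induction S using Finset.induction_on with
  | empty => simp
  | insert a S haS ih =>
    simp only [forall_mem_insert] at hS he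
    rw [prod_insert haS, Nat.primeFactors_mul (pow_ne_zero _ hS.1.ne_zero)
      (prod_ne_zero_iff.mpr fun p hp => pow_ne_zero _ (hS.2 p hp).ne_zero),
      Nat.primeFactors_prime_pow he.1 hS.1, ih hS.2 he.2, insert_eq]

lemma totient_prod_prime_pow {S : Finset ℕ} (hS : ∀ p ∈ S, p.Prime) (e : ℕ → ℕ) :
    (∏ p ∈ S, p ^ e p).totient = ∏ p ∈ S, (p ^ e p).totient := by
  induction S using Finset.induction_on with
  | empty => simp
  | insert a S haS ih =>
    simp only [forall_mem_insert] at hS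
    rw [prod_insert haS, prod_insert haS,
      Nat.totient_mul ((coprime_prod_prime_pow hS.1 hS.2 haS e).pow_left _), ih hS.2]

lemma int_gcd_prod_prime_pow_eq_one_iff {S : Finset ℕ} (hS : ∀ p ∈ S, p.Prime) {e : ℕ → ℕ}
    (he : ∀ p ∈ S, e p ≠ 0) (c : ℤ) :
    Int.gcd c (∏ p ∈ S, p ^ e p : ℕ) = 1 ↔ ∀ p ∈ S, ¬ (p : ℤ) ∣ c := by
  rw [← Int.isCoprime_iff_gcd_eq_one, Nat.cast_prod, IsCoprime.prod_right_iff]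
  exact forall₂_congr fun p hp => isCoprime_prime_pow_iff (hS p hp) (he p hp) c

lemma primeFactors_int_gcd {n : ℕ} (hn : n ≠ 0) (c : ℤ) :
    (Int.gcd c n).primeFactors = {p ∈ n.primeFactors | ((p : ℕ) : ℤ) ∣ c} := by
  ext p
  simp only [Nat.mem_primeFactors, mem_filter, Int.gcd, Int.natAbs_natCast, Nat.dvd_gcd_iff,
    Int.natCast_dvd, ne_eq, Nat.gcd_eq_zero_iff, hn, and_false, not_false_eq_true, and_true]
  tauto

-- Units `a mod q`, `b mod r` with `a s / q - b t / r ≡ c / lcm q r (mod 1)`.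
def twistedCount (q r : ℕ) (s t c : ℤ) : ℕ :=
  #{ab ∈ range q ×ˢ range r | ab.1.Coprime q ∧ ab.2.Coprime r ∧
    ((ab.1 : ℕ) : ℤ) * s * (q.lcm r / q : ℕ) - ((ab.2 : ℕ) : ℤ) * t * (q.lcm r / r : ℕ)
      ≡ c [ZMOD q.lcm r]}

lemma twistedCount_comm (q r : ℕ) (s t c : ℤ) :
    twistedCount q r s t c = twistedCount r q t s (-c) := by
  unfold twistedCount
  rw [Nat.lcm_comm r q]
  refine card_nbij' Prod.swap Prod.swap ?_ ?_ (fun _ _ => rfl) (fun _ _ => rfl) <;>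
  · rintro ⟨a, b⟩
    simp only [coe_filter, mem_product, mem_range, Set.mem_ofPred_eq, Prod.fst_swap,
      Prod.snd_swap, ← Int.neg_modEq_neg (b := c), neg_sub]
    tauto

lemma twistedCount_of_dvd {q r : ℕ} [NeZero q] (hrq : r ∣ q) {s : ℤ} (hs : IsCoprime s q)
    (t c : ℤ) :
    twistedCount q r s t c =
      #{b ∈ range r | b.Coprime r ∧ IsCoprime (c + ((b : ℕ) : ℤ) * t * (q / r : ℕ)) q} := by
  rw [twistedCount, Nat.lcm_eq_left hrq, Nat.div_self (NeZero.pos q),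
    card_filter_product_eq_sum, card_filter]
  refine sum_congr rfl fun b _ => ?_
  by_cases hb : b.Coprime r
  · have hcond : ∀ a : ℕ, (a : ℤ) * s * (1 : ℕ) - b * t * (q / r : ℕ) ≡ c [ZMOD q] ↔
        (a : ℤ) * s ≡ c + b * t * (q / r : ℕ) [ZMOD q] := fun a => by
      rw [Nat.cast_one, mul_one, ← ZMod.intCast_eq_intCast_iff, ← ZMod.intCast_eq_intCast_iff,
        Int.cast_sub, sub_eq_iff_eq_add, Int.cast_add]
    simp only [hcond, eq_true hb, true_and, card_filter_coprime_mul_modEq hs]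
  · simp [hb]

lemma twistedCount_prime_pow_of_lt {p u v : ℕ} (hp : p.Prime) (hvu : v < u) {s : ℤ}
    (hs : IsCoprime s p) (t c : ℤ) :
    twistedCount (p ^ u) (p ^ v) s t c = if (p : ℤ) ∣ c then 0 else (p ^ v).totient := by
  have : NeZero (p ^ u) := ⟨pow_ne_zero _ hp.ne_zero⟩
  have hdvd : ∀ b : ℕ, (p : ℤ) ∣ c + b * t * (p ^ (u - v) : ℕ) ↔ (p : ℤ) ∣ c := fun b =>
    (dvd_add_left (Dvd.dvd.mul_left (by push_cast; exact dvd_pow_self _ (by omega)) _))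
  rw [twistedCount_of_dvd (pow_dvd_pow p hvu.le) (by push_cast; exact hs.pow_right),
    Nat.pow_div hvu.le hp.pos]
  simp_rw [isCoprime_prime_pow_iff hp (by omega : u ≠ 0), hdvd]
  split_ifs with hc
  · simp [hc]
  · simp only [hc, not_false_eq_true, and_true, Nat.totient_eq_card_coprime, Nat.coprime_comm]

lemma twistedCount_prime_pow_self {p e : ℕ} (hp : p.Prime) (he : e ≠ 0) {s t : ℤ}
    (hs : IsCoprime s p) (ht : IsCoprime t p) (c : ℤ) :
    twistedCount (p ^ e) (p ^ e) s t c = p ^ (e - 1) * if (p : ℤ) ∣ c then p - 1 else p - 2 := by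
  have : NeZero (p ^ e) := ⟨pow_ne_zero _ hp.ne_zero⟩
  have hperiodic : Function.Periodic
      (fun b : ℕ => b.Coprime p ∧ IsCoprime (c + (b : ℤ) * t) p) p := fun b => by
    simp only [Nat.coprime_add_self_left, Nat.cast_add, add_mul, ← add_assoc,
      IsCoprime.add_mul_left_left_iff]
  rw [twistedCount_of_dvd dvd_rfl (by push_cast; exact hs.pow_right), Nat.div_self (NeZero.pos _),
    Nat.cast_one]
  simp_rw [mul_one, Nat.coprime_pow_right_iff (Nat.pos_of_ne_zero he), Nat.cast_pow,
    IsCoprime.pow_right_iff (Nat.pos_of_ne_zero he)]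
  rw [← card_filter_coprime_add_mul_of_prime hp ht c, ← card_filter_range_mul_of_periodic hperiodic,
    ← pow_succ, Nat.sub_add_cancel (Nat.pos_of_ne_zero he)]

def localCount (p u v : ℕ) (c : ℤ) : ℕ :=
  if u = v then p ^ (u - 1) * if (p : ℤ) ∣ c then p - 1 else p - 2
  else if (p : ℤ) ∣ c then 0 else (p ^ min u v).totient

lemma localCount_comm (p u v : ℕ) (c : ℤ) : localCount p u v c = localCount p v u (-c) := by
  simp only [localCount, eq_comm (a := u), min_comm u v, dvd_neg]
  split_ifs <;> simp_all

lemma twistedCount_prime_pow {p u v : ℕ} (hp : p.Prime) (huv : u ≠ 0 ∨ v ≠ 0) {s t : ℤ}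
    (hs : IsCoprime s p) (ht : IsCoprime t p) (c : ℤ) :
    twistedCount (p ^ u) (p ^ v) s t c = localCount p u v c := by
  rcases lt_trichotomy u v with h | rfl | h
  · rw [twistedCount_comm, twistedCount_prime_pow_of_lt hp h ht, localCount_comm, localCount,
      if_neg h.ne', min_eq_right h.le]
  · rw [twistedCount_prime_pow_self hp (by tauto) hs ht, localCount, if_pos rfl]
  · rw [twistedCount_prime_pow_of_lt hp h hs, localCount, if_neg h.ne', min_eq_right h.le]

lemma twistedCount_mul {q₁ q₂ r₁ r₂ : ℕ} (hq₁ : q₁ ≠ 0) (hq₂ : q₂ ≠ 0) (hr₁ : r₁ ≠ 0)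
    (hr₂ : r₂ ≠ 0) (hco : (q₁.lcm r₁).Coprime (q₂.lcm r₂)) (s t c : ℤ) :
    twistedCount (q₁ * q₂) (r₁ * r₂) s t c =
      twistedCount q₁ r₁ (s * (q₂.lcm r₂ / q₂ : ℕ)) (t * (q₂.lcm r₂ / r₂ : ℕ)) c *
        twistedCount q₂ r₂ (s * (q₁.lcm r₁ / q₁ : ℕ)) (t * (q₁.lcm r₁ / r₁ : ℕ)) c := by
  have hq : q₁.Coprime q₂ :=
    (hco.coprime_dvd_left (Nat.dvd_lcm_left _ _)).coprime_dvd_right (Nat.dvd_lcm_left _ _)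
  have hr : r₁.Coprime r₂ :=
    (hco.coprime_dvd_left (Nat.dvd_lcm_right _ _)).coprime_dvd_right (Nat.dvd_lcm_right _ _)
  unfold twistedCount
  rw [lcm_mul_mul_of_coprime hco, ← card_filter_range_mul_product hq hr hq₁ hq₂ hr₁ hr₂,
    ← Nat.div_mul_div_comm (Nat.dvd_lcm_left _ _) (Nat.dvd_lcm_left _ _),
    ← Nat.div_mul_div_comm (Nat.dvd_lcm_right _ _) (Nat.dvd_lcm_right _ _)]
  congr 1
  refine filter_congr fun ⟨a, b⟩ _ => ?_
  -- Modulo `lcm q₁ r₁` only `a % q₁` and `b % r₁` matter; the other cofactors become twists.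
  have h₁ := twistedDiff_mul_modEq (M := q₂.lcm r₂ / q₂) (N := q₂.lcm r₂ / r₂)
    (Nat.dvd_lcm_left q₁ r₁) (Nat.dvd_lcm_right q₁ r₁) a b s t
  have h₂ := twistedDiff_mul_modEq (M := q₁.lcm r₁ / q₁) (N := q₁.lcm r₁ / r₁)
    (Nat.dvd_lcm_left q₂ r₂) (Nat.dvd_lcm_right q₂ r₂) a b s t
  rw [Nat.mul_comm (q₂.lcm r₂ / q₂), Nat.mul_comm (q₂.lcm r₂ / r₂)] at h₂
  rw [Nat.cast_mul (q₁.lcm r₁), ← Int.modEq_and_modEq_iff_modEq_mul (by simpa using hco)]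
  simp only [Int.ModEq] at h₁ h₂ ⊢
  rw [h₁, h₂]
  simp only [Nat.coprime_mul_iff_right, ZMod.coprime_mod_iff_coprime]
  tauto

lemma twistedCount_prod_prime_pow {S : Finset ℕ} (hS : ∀ p ∈ S, p.Prime) {u v : ℕ → ℕ}
    (huv : ∀ p ∈ S, u p ≠ 0 ∨ v p ≠ 0) {s t : ℤ} (hs : ∀ p ∈ S, IsCoprime s p)
    (ht : ∀ p ∈ S, IsCoprime t p) (c : ℤ) :
    twistedCount (∏ p ∈ S, p ^ u p) (∏ p ∈ S, p ^ v p) s t c =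
      ∏ p ∈ S, localCount p (u p) (v p) c := by
  induction S using Finset.induction_on generalizing s t with
  | empty => simp [twistedCount, Int.modEq_one]
  | insert a S haS ih =>
    simp only [forall_mem_insert] at hS huv hs ht
    have hne : ∀ e : ℕ → ℕ, ∏ p ∈ S, p ^ e p ≠ 0 :=
      fun e => prod_ne_zero_iff.mpr fun p hp => pow_ne_zero _ (hS.2 p hp).ne_zero
    have hcopS : a.Coprime ((∏ p ∈ S, p ^ u p) * ∏ p ∈ S, p ^ v p) :=
      Nat.Coprime.mul_right (coprime_prod_prime_pow hS.1 hS.2 haS u)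
        (coprime_prod_prime_pow hS.1 hS.2 haS v)
    have hcopa : ∀ p ∈ S, (a ^ u a * a ^ v a).Coprime p := fun p hp =>
      have hap : a.Coprime p := (Nat.coprime_primes hS.1 (hS.2 p hp)).mpr fun h => haS (h ▸ hp)
      (hap.pow_left _).mul_left (hap.pow_left _)
    have hco : ((a ^ u a).lcm (a ^ v a)).Coprime ((∏ p ∈ S, p ^ u p).lcm (∏ p ∈ S, p ^ v p)) :=
      ((hcopS.pow_left _).mul_left (hcopS.pow_left _)).coprime_dvd_left
        (Nat.lcm_dvd_mul _ _) |>.coprime_dvd_right (Nat.lcm_dvd_mul _ _)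
    rw [prod_insert haS, prod_insert haS, prod_insert haS,
      twistedCount_mul (pow_ne_zero _ hS.1.ne_zero) (hne u) (pow_ne_zero _ hS.1.ne_zero)
        (hne v) hco,
      twistedCount_prime_pow hS.1 huv.1
        (isCoprime_mul_lcm_div hs.1 hcopS.symm (Nat.dvd_lcm_left _ _))
        (isCoprime_mul_lcm_div ht.1 hcopS.symm (Nat.dvd_lcm_right _ _)),
      ih hS.2 huv.2
        (fun p hp => isCoprime_mul_lcm_div (hs.2 p hp) (hcopa p hp) (Nat.dvd_lcm_left _ _))
        (fun p hp => isCoprime_mul_lcm_div (ht.2 p hp) (hcopa p hp) (Nat.dvd_lcm_right _ _))]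

lemma prime_of_mem_union {q r p : ℕ} (hp : p ∈ q.primeFactors ∪ r.primeFactors) : p.Prime := by
  rcases mem_union.mp hp with h | h <;> exact Nat.prime_of_mem_primeFactors h

lemma factorization_ne_zero_of_mem_union {q r p : ℕ}
    (hp : p ∈ q.primeFactors ∪ r.primeFactors) : q.factorization p ≠ 0 ∨ r.factorization p ≠ 0 := by
  simpa only [← Finsupp.mem_support_iff, Nat.support_factorization] using mem_union.mp hp

lemma twistedCount_one_one_eq_prod {q r : ℕ} (hq : q ≠ 0) (hr : r ≠ 0) (c : ℤ) :
    twistedCount q r 1 1 c = ∏ p ∈ q.primeFactors ∪ r.primeFactors,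
      localCount p (q.factorization p) (r.factorization p) c := by
  have hprod : ∀ n ≠ 0, n.primeFactors ⊆ q.primeFactors ∪ r.primeFactors →
      ∏ p ∈ q.primeFactors ∪ r.primeFactors, p ^ n.factorization p = n := fun n hn hsub => by
    rw [← Finsupp.prod_of_support_subset _ (by rwa [Nat.support_factorization]) _
      (fun _ _ => pow_zero _), Nat.prod_factorization_pow_eq_self hn]
  have := twistedCount_prod_prime_pow (S := q.primeFactors ∪ r.primeFactors)
    (fun _ => prime_of_mem_union) (fun _ => factorization_ne_zero_of_mem_union)
    (fun _ _ => isCoprime_one_left) (fun _ _ => isCoprime_one_left) c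
  rwa [hprod q hq subset_union_left, hprod r hr subset_union_right] at this

lemma card_Icc_filter_eq_twistedCount {q r : ℕ} (hq : q ≠ 0) (hr : r ≠ 0) (c : ℤ) :
    #{ab ∈ Icc 1 q ×ˢ Icc 1 r | Nat.gcd ab.1 q = 1 ∧ Nat.gcd ab.2 r = 1 ∧
        ((ab.1 : ℤ) * ((r / Nat.gcd q r : ℕ) : ℤ)
          - (ab.2 : ℤ) * ((q / Nat.gcd q r : ℕ) : ℤ)) ≡ c [ZMOD (Nat.lcm q r)]} =
      twistedCount q r 1 1 c := by
  have hdivq := lcm_div_left_eq_div_gcd hq r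
  have hdivr : q.lcm r / r = q / q.gcd r := by
    rw [Nat.lcm_comm, Nat.gcd_comm, lcm_div_left_eq_div_gcd hr]
  rw [twistedCount, ← card_filter_Icc_product_Icc, hdivq, hdivr]
  · simp only [mul_one]
  · rintro a b
    have h := twistedDiff_mul_modEq (M := 1) (N := 1) (Nat.dvd_lcm_left q r)
      (Nat.dvd_lcm_right q r) a b 1 1
    simp only [mul_one, Nat.cast_one, Int.ModEq] at h ⊢
    rw [ZMod.coprime_mod_iff_coprime, ZMod.coprime_mod_iff_coprime, h]

lemma localCount_self_cast {p e : ℕ} (hp : p.Prime) (he : e ≠ 0) (c : ℤ) :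
    (localCount p e e c : ℝ) =
      p ^ e * if (p : ℤ) ∣ c then 1 - 1 / (p : ℝ) else 1 - 2 / (p : ℝ) := by
  obtain ⟨k, rfl⟩ := Nat.exists_eq_add_one_of_ne_zero he
  have hp0 : (p : ℝ) ≠ 0 := by exact_mod_cast hp.ne_zero
  rw [localCount, if_pos rfl, Nat.add_sub_cancel]
  split_ifs
  · rw [Nat.cast_mul, Nat.cast_sub hp.one_le]; field_simp; push_cast; ring
  · rw [Nat.cast_mul, Nat.cast_sub hp.two_le]; field_simp; push_cast; ring

lemma prod_localCount_of_ne (q r : ℕ) (c : ℤ) :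
    ∏ p ∈ q.primeFactors ∪ r.primeFactors with q.factorization p ≠ r.factorization p,
      (localCount p (q.factorization p) (r.factorization p) c : ℝ) =
    if Int.gcd c (maxPart q r) = 1 then ((minPart q r).totient : ℝ) else 0 := by
  have hD : ∀ p ∈ {p ∈ q.primeFactors ∪ r.primeFactors | q.factorization p ≠ r.factorization p},
      p.Prime ∧ max (q.factorization p) (r.factorization p) ≠ 0 := fun p hp => by
    rw [mem_filter] at hp
    exact ⟨prime_of_mem_union hp.1, by have := factorization_ne_zero_of_mem_union hp.1; omega⟩
  have hgcd : Int.gcd c (maxPart q r) = 1 ↔ ∀ p ∈ {p ∈ q.primeFactors ∪ r.primeFactors |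
      q.factorization p ≠ r.factorization p}, ¬ (p : ℤ) ∣ c := by
    rw [maxPart, ← prod_filter]
    exact int_gcd_prod_prime_pow_eq_one_iff (fun p hp => (hD p hp).1) (fun p hp => (hD p hp).2) c
  simp only [hgcd]
  rw [minPart, ← prod_filter, totient_prod_prime_pow (fun p hp => (hD p hp).1), Nat.cast_prod,
    ← prod_ite_zero]
  refine prod_congr rfl fun p hp => ?_
  rw [localCount, if_neg (mem_filter.mp hp).2]
  split_ifs <;> simp_all

lemma equalPart_eq_prod (q r : ℕ) :
    equalPart q r = ∏ p ∈ q.primeFactors ∪ r.primeFactors with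
      q.factorization p = r.factorization p, p ^ q.factorization p := by
  rw [equalPart, ← prod_filter, filter_union, union_eq_left.mpr]
  intro p hp
  rw [mem_filter] at hp ⊢
  refine ⟨?_, hp.2⟩
  rw [← Nat.support_factorization, Finsupp.mem_support_iff, hp.2, ← Finsupp.mem_support_iff,
    Nat.support_factorization]
  exact hp.1

lemma prod_localCount_of_eq (q r : ℕ) (c : ℤ) :
    ∏ p ∈ q.primeFactors ∪ r.primeFactors with q.factorization p = r.factorization p,
      (localCount p (q.factorization p) (r.factorization p) c : ℝ) =
    (equalPart q r : ℝ) *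
      (∏ p ∈ (Int.gcd c (equalPart q r)).primeFactors, (1 - 1 / (p : ℝ))) *
      (∏ p ∈ (equalPart q r).primeFactors \ (Int.gcd c (equalPart q r)).primeFactors,
        (1 - 2 / (p : ℝ))) := by
  set E := {p ∈ q.primeFactors ∪ r.primeFactors | q.factorization p = r.factorization p}
  have hE : ∀ p ∈ E, p.Prime ∧ q.factorization p ≠ 0 := fun p hp => by
    rw [mem_filter] at hp
    exact ⟨prime_of_mem_union hp.1, by have := factorization_ne_zero_of_mem_union hp.1; omega⟩
  have hpf : (equalPart q r).primeFactors = E := by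
    rw [equalPart_eq_prod, primeFactors_prod_prime_pow (fun p hp => (hE p hp).1)
      (fun p hp => (hE p hp).2)]
  have hℓ : equalPart q r ≠ 0 := by
    rw [equalPart_eq_prod]
    exact prod_ne_zero_iff.mpr fun p hp => pow_ne_zero _ (hE p hp).1.ne_zero
  have hloc : ∀ p ∈ E, (localCount p (q.factorization p) (r.factorization p) c : ℝ) =
      p ^ q.factorization p * if (p : ℤ) ∣ c then 1 - 1 / (p : ℝ) else 1 - 2 / (p : ℝ) :=
    fun p hp => by
      rw [← (mem_filter.mp hp).2]
      exact localCount_self_cast (hE p hp).1 (hE p hp).2 c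
  rw [primeFactors_int_gcd hℓ, hpf, ← filter_not, equalPart_eq_prod, Nat.cast_prod,
    prod_congr rfl hloc, prod_mul_distrib, prod_ite]
  push_cast
  ring

theorem stmt13_general (q r : ℕ) (hq : 0 < q) (hr : 0 < r) (c : ℤ) :
    ((((Finset.Icc 1 q) ×ˢ (Finset.Icc 1 r)).filter (fun ab : ℕ × ℕ =>
        Nat.gcd ab.1 q = 1 ∧ Nat.gcd ab.2 r = 1 ∧
        ((ab.1 : ℤ) * ((r / Nat.gcd q r : ℕ) : ℤ)
          - (ab.2 : ℤ) * ((q / Nat.gcd q r : ℕ) : ℤ)) ≡ c [ZMOD (Nat.lcm q r)])).card : ℝ)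
    = if Int.gcd c (maxPart q r) = 1 then
        (Nat.totient (minPart q r) : ℝ) * (equalPart q r : ℝ) *
          (∏ p ∈ (Int.gcd c (equalPart q r)).primeFactors, (1 - 1 / (p : ℝ))) *
          (∏ p ∈ (equalPart q r).primeFactors \ (Int.gcd c (equalPart q r)).primeFactors,
            (1 - 2 / (p : ℝ)))
      else 0 := by
  rw [card_Icc_filter_eq_twistedCount hq.ne' hr.ne', twistedCount_one_one_eq_prod hq.ne' hr.ne',
    Nat.cast_prod, ← prod_filter_mul_prod_filter_not _
      (fun p => q.factorization p = r.factorization p),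
    prod_localCount_of_eq, prod_localCount_of_ne]
  split_ifs <;> ring

theorem stmt13 (q r : ℕ) (hq : 0 < q) (hr : 0 < r) (hqr : q ≠ r) (c : ℤ) :
    ((((Finset.Icc 1 q) ×ˢ (Finset.Icc 1 r)).filter (fun ab : ℕ × ℕ =>
        Nat.gcd ab.1 q = 1 ∧ Nat.gcd ab.2 r = 1 ∧
        ((ab.1 : ℤ) * ((r / Nat.gcd q r : ℕ) : ℤ)
          - (ab.2 : ℤ) * ((q / Nat.gcd q r : ℕ) : ℤ)) ≡ c [ZMOD (Nat.lcm q r)])).card : ℝ)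
    = if Int.gcd c (maxPart q r) = 1 then
        (Nat.totient (minPart q r) : ℝ) * (equalPart q r : ℝ) *
          (∏ p ∈ (Int.gcd c (equalPart q r)).primeFactors, (1 - 1 / (p : ℝ))) *
          (∏ p ∈ (equalPart q r).primeFactors \ (Int.gcd c (equalPart q r)).primeFactors,
            (1 - 2 / (p : ℝ)))
      else 0 :=
  stmt13_general q r hq hr c
end

section
/- Let ψ : ℕ → [0,∞) be non-increasing. Then there is an absolute constant C such that for all Q ≥ 1 and m ≥ 1, ∑_{q=1}^{Q} ψ(q)^m ≤ C^m ∑_{q=1}^{Q} (φ(q) ψ(q)/q)^m. -/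
/-!
`φ(n)/n = ∏_{p ∣ n} (1 - 1/p) ≥ 1 - ∑_{p ∣ n} 1/p`, and swapping the order of summation gives
`∑_{n ≤ N} ∑_{p ∣ n} 1/p ≤ N ∑_p 1/p² ≤ 11N/12`; hence `∑_{n ≤ N} φ(n)/n ≥ N/12`, and by the
power-mean inequality `∑_{n ≤ N} (φ(n)/n)^m ≥ N/12^m` for every `N`. Since `ψ^m` is nonnegative and
non-increasing, summation by parts against these partial sums gives
`∑_{q ≤ Q} (φ(q)ψ(q)/q)^m ≥ 12^{-m} ∑_{q ≤ Q} ψ(q)^m`.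
-/

open Finset

theorem Finset.one_sub_sum_le_prod_one_sub {ι R : Type*} [CommRing R] [LinearOrder R]
    [IsStrictOrderedRing R] (s : Finset ι) {f : ι → R} (hf₀ : ∀ i ∈ s, 0 ≤ f i)
    (hf₁ : ∀ i ∈ s, f i ≤ 1) :
    1 - ∑ i ∈ s, f i ≤ ∏ i ∈ s, (1 - f i) := by
  classical
  induction s using Finset.induction_on with
  | empty => simp
  | insert a s ha ih =>
    rw [sum_insert ha, prod_insert ha]
    have ih := ih (fun i hi => hf₀ i (mem_insert_of_mem hi))
      fun i hi => hf₁ i (mem_insert_of_mem hi)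
    have hfa₀ := hf₀ a (mem_insert_self a s)
    have hfa₁ := hf₁ a (mem_insert_self a s)
    have hsum : 0 ≤ ∑ i ∈ s, f i := sum_nonneg fun i hi => hf₀ i (mem_insert_of_mem hi)
    nlinarith [mul_le_mul_of_nonneg_left ih (sub_nonneg.2 hfa₁)]

theorem Nat.one_sub_sum_inv_primeFactors_le_totient_div {n : ℕ} (hn : n ≠ 0) :
    1 - ∑ p ∈ n.primeFactors, (p : ℝ)⁻¹ ≤ n.totient / n := by
  have h : (n.totient : ℝ) = n * ∏ p ∈ n.primeFactors, (1 - (p : ℝ)⁻¹) := by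
    have := congrArg ((↑) : ℚ → ℝ) (Nat.totient_eq_mul_prod_factors n)
    push_cast at this
    exact this
  rw [h, mul_div_cancel_left₀ _ (by positivity)]
  exact one_sub_sum_le_prod_one_sub _ (fun p _ => by positivity) fun p hp =>
    inv_le_one_of_one_le₀ (by exact_mod_cast (Nat.prime_of_mem_primeFactors hp).one_le)

theorem Nat.sum_inv_sq_filter_prime_le (s : Finset ℕ) :
    ∑ p ∈ s with p.Prime, ((p : ℝ) ^ 2)⁻¹ ≤ 11 / 12 := by
  have hsub : {p ∈ s | p.Prime} ⊆ insert 2 (Ioo 2 (s.sup id + 1)) := by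
    intro p hp
    obtain ⟨hps, hp⟩ := mem_filter.1 hp
    have : p ≤ s.sup id := le_sup (f := id) hps
    have := hp.two_le
    rw [mem_insert, mem_Ioo]
    omega
  calc ∑ p ∈ s with p.Prime, ((p : ℝ) ^ 2)⁻¹
      ≤ ∑ p ∈ insert 2 (Ioo 2 (s.sup id + 1)), ((p : ℝ) ^ 2)⁻¹ :=
        sum_le_sum_of_subset_of_nonneg hsub fun _ _ _ => by positivity
    _ = 4⁻¹ + ∑ p ∈ Ioo 2 (s.sup id + 1), ((p : ℝ) ^ 2)⁻¹ := by
        rw [sum_insert (by simp)]; norm_num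
    _ ≤ 4⁻¹ + 2 / (2 + 1) := by gcongr; exact sum_Ioo_inv_sq_le _ _
    _ = 11 / 12 := by norm_num

theorem Nat.sum_sum_inv_primeFactors_le (N : ℕ) :
    ∑ n ∈ Icc 1 N, ∑ p ∈ n.primeFactors, (p : ℝ)⁻¹ ≤ 11 / 12 * N := by
  have hswap : ∑ n ∈ Icc 1 N, ∑ p ∈ n.primeFactors, (p : ℝ)⁻¹
      = ∑ p ∈ Icc 1 N with p.Prime, ∑ n ∈ Ioc 0 N with p ∣ n, (p : ℝ)⁻¹ := by
    refine sum_comm' fun n p => ?_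
    simp only [mem_Icc, mem_filter, mem_Ioc, Nat.mem_primeFactors]
    constructor
    · rintro ⟨hn, hp, hpn, -⟩
      exact ⟨⟨⟨by omega, hn.2⟩, hpn⟩, ⟨⟨hp.one_le, (Nat.le_of_dvd hn.1 hpn).trans hn.2⟩, hp⟩⟩
    · rintro ⟨⟨hn, hpn⟩, -, hp⟩
      exact ⟨⟨hn.1, hn.2⟩, hp, hpn, by omega⟩
  rw [hswap]
  have hcount : ∀ p ∈ {p ∈ Icc 1 N | p.Prime},
      ∑ n ∈ Ioc 0 N with p ∣ n, (p : ℝ)⁻¹ ≤ N * ((p : ℝ) ^ 2)⁻¹ := fun p _ => by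
    rw [sum_const, Nat.Ioc_filter_dvd_card_eq_div, nsmul_eq_mul, pow_two, mul_inv, ← mul_assoc]
    gcongr
    exact Nat.cast_div_le.trans_eq (div_eq_mul_inv _ _)
  calc ∑ p ∈ Icc 1 N with p.Prime, ∑ n ∈ Ioc 0 N with p ∣ n, (p : ℝ)⁻¹
      ≤ ∑ p ∈ Icc 1 N with p.Prime, N * ((p : ℝ) ^ 2)⁻¹ := sum_le_sum hcount
    _ ≤ N * (11 / 12) := by rw [← mul_sum]; gcongr; exact Nat.sum_inv_sq_filter_prime_le _
    _ = 11 / 12 * N := mul_comm _ _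

theorem Nat.le_sum_totient_div (N : ℕ) : 12⁻¹ * N ≤ ∑ n ∈ Icc 1 N, (n.totient : ℝ) / n := by
  calc 12⁻¹ * (N : ℝ) ≤ N - ∑ n ∈ Icc 1 N, ∑ p ∈ n.primeFactors, (p : ℝ)⁻¹ := by
        linarith [Nat.sum_sum_inv_primeFactors_le N]
    _ = ∑ n ∈ Icc 1 N, (1 - ∑ p ∈ n.primeFactors, (p : ℝ)⁻¹) := by simp [sum_sub_distrib]
    _ ≤ ∑ n ∈ Icc 1 N, (n.totient : ℝ) / n := sum_le_sum fun n hn =>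
        Nat.one_sub_sum_inv_primeFactors_le_totient_div
          (Nat.one_le_iff_ne_zero.1 (mem_Icc.1 hn).1)

theorem Finset.pow_mul_card_le_sum_pow {ι α : Type*} [Field α] [LinearOrder α]
    [IsStrictOrderedRing α] {s : Finset ι} {f : ι → α} {c : α} (hc : 0 ≤ c)
    (hf : ∀ i ∈ s, 0 ≤ f i) (h : c * #s ≤ ∑ i ∈ s, f i) (m : ℕ) :
    c ^ m * #s ≤ ∑ i ∈ s, f i ^ m := by
  rcases m with _ | m
  · simp
  rcases s.eq_empty_or_nonempty with rfl | hs
  · simp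
  calc c ^ (m + 1) * #s = (c * #s) ^ (m + 1) / #s ^ m := by
        field_simp
        ring
    _ ≤ (∑ i ∈ s, f i) ^ (m + 1) / #s ^ m := by gcongr
    _ ≤ ∑ i ∈ s, f i ^ (m + 1) := pow_sum_div_card_le_sum_pow hf m

theorem mul_sum_Icc_le_sum_Icc_mul_of_antitone {g h : ℕ → ℝ} {c : ℝ} (hg₀ : ∀ n, 0 ≤ g n)
    (hg : Antitone g) (hh : ∀ n, c * n ≤ ∑ k ∈ Icc 1 n, h k) (N : ℕ) :
    c * ∑ k ∈ Icc 1 N, g k ≤ ∑ k ∈ Icc 1 N, h k * g k := by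
  -- summation by parts, carrying the nonnegative boundary term along the induction
  suffices key : ∀ N : ℕ, c * ∑ k ∈ Icc 1 N, g k + (∑ k ∈ Icc 1 N, h k - c * N) * g N
      ≤ ∑ k ∈ Icc 1 N, h k * g k by
    nlinarith [key N, mul_nonneg (sub_nonneg.2 (hh N)) (hg₀ N)]
  intro N
  induction N with
  | zero => simp
  | succ N ih =>
    simp only [sum_Icc_succ_top (Nat.le_add_left 1 N), Nat.cast_succ]
    nlinarith [mul_le_mul_of_nonneg_left (hg N.le_succ) (sub_nonneg.2 (hh N))]

theorem stmt14 :
    ∃ C : ℝ, 0 < C ∧ ∀ ψ : ℕ → ℝ, (∀ q, 0 ≤ ψ q) → Antitone ψ →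
      ∀ Q m : ℕ, 1 ≤ Q → 1 ≤ m →
        ∑ q ∈ Finset.Icc 1 Q, ψ q ^ m ≤
          C ^ m * ∑ q ∈ Finset.Icc 1 Q, ((Nat.totient q : ℝ) * ψ q / q) ^ m := by
  refine ⟨12, by norm_num, fun ψ hψ₀ hψ Q m _ _ => ?_⟩
  have hdensity (n : ℕ) : (12 ^ m)⁻¹ * n ≤ ∑ q ∈ Icc 1 n, ((q.totient : ℝ) / q) ^ m := by
    have := pow_mul_card_le_sum_pow (s := Icc 1 n) (f := fun q : ℕ => (q.totient : ℝ) / q)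
      (c := 12⁻¹) (by norm_num) (fun q _ => by positivity)
      (by simpa using Nat.le_sum_totient_div n) m
    simpa [inv_pow] using this
  have habel := mul_sum_Icc_le_sum_Icc_mul_of_antitone (fun q => pow_nonneg (hψ₀ q) m)
    (fun a b hab => pow_le_pow_left₀ (hψ₀ b) (hψ hab) m) hdensity Q
  calc ∑ q ∈ Icc 1 Q, ψ q ^ m = 12 ^ m * ((12 ^ m)⁻¹ * ∑ q ∈ Icc 1 Q, ψ q ^ m) := by
        field_simp
    _ ≤ 12 ^ m * ∑ q ∈ Icc 1 Q, ((q.totient : ℝ) / q) ^ m * ψ q ^ m := by gcongr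
    _ = 12 ^ m * ∑ q ∈ Icc 1 Q, ((q.totient : ℝ) * ψ q / q) ^ m := by
        simp only [← mul_pow, div_mul_eq_mul_div]
end

section
/- Let ψ : ℕ → [0,∞), let 1 ≤ r < q be integers, and y, z ∈ ℝ. Define A_q^y = ⋃_{gcd(a,q)=1} [(a+y)/q − ψ(q)/q, (a+y)/q + ψ(q)/q] ∩ [0,1) and similarly A_r^z. Then there is an absolute constant C with λ(A_q^y ∩ A_r^z) ≤ C · ( ψ(q) ψ(r) + (ψ(q)/q) · φ(gcd(q,r)) ). -/
/-!
Each interval of `A_q^y` meets each interval of `A_r^z` in measure at most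
`2 min (ψ q / q, ψ r / r)`, so it suffices to count the pairs `(a, b)` whose intervals meet.
For such a pair, `c = a r - b q` is a multiple of `d = gcd q r` within `ψ q * r + ψ r * q` of the
fixed real number `z q - y r`, which leaves at most `2 (ψ q * r + ψ r * q) / d + 1` values of `c`.
For each `c` there are at most `φ d` pairs: two solutions differ by `s • (q / d, r / d)`, and
after splitting `d = d₁ d₂` with `d₁` coprime to `q / d` and `d₂` coprime to `r / d`, the residue
of `s` modulo `d` is determined by `a mod d₁` and `b mod d₂`, which are units.
-/

open MeasureTheory Finset

theorem Nat.exists_mul_eq_coprime_of_prime_dvd (m : ℕ) {n : ℕ} (hn : n ≠ 0) :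
    ∃ n₁ n₂, n₁ * n₂ = n ∧ n₁.Coprime m ∧ ∀ p, p.Prime → p ∣ n₂ → p ∣ m := by
  induction n using induction_on_primes with
  | zero => exact absurd rfl hn
  | one =>
    exact ⟨1, 1, rfl, Nat.coprime_one_left m, fun p hp h => absurd (Nat.dvd_one.mp h) hp.ne_one⟩
  | prime_mul p a hp ih =>
    obtain ⟨a₁, a₂, rfl, ha₁, ha₂⟩ := ih (right_ne_zero_of_mul hn)
    by_cases hpm : p ∣ m
    · refine ⟨a₁, p * a₂, by ring, ha₁, fun p' hp' h => ?_⟩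
      rcases hp'.dvd_mul.mp h with h | h
      · rwa [(Nat.prime_dvd_prime_iff_eq hp' hp).mp h]
      · exact ha₂ p' hp' h
    · exact ⟨p * a₁, a₂, by ring, ((Nat.Prime.coprime_iff_not_dvd hp).mpr hpm).mul_left ha₁, ha₂⟩

theorem Nat.exists_gcd_eq_mul_coprime {q r : ℕ} (hq : q ≠ 0) :
    ∃ d₁ d₂ q' r', q.gcd r = d₁ * d₂ ∧ q = d₁ * d₂ * q' ∧ r = d₁ * d₂ * r' ∧
      q'.Coprime r' ∧ d₁.Coprime q' ∧ d₂.Coprime r' ∧ d₁.Coprime d₂ := by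
  obtain ⟨q', r', hqr', hq', hr'⟩ := Nat.exists_coprime q r
  obtain ⟨d₁, d₂, hd, hd₁, hd₂⟩ :=
    Nat.exists_mul_eq_coprime_of_prime_dvd q' (Nat.gcd_ne_zero_left hq)
  refine ⟨d₁, d₂, q', r', hd.symm, hq'.trans (by rw [← hd, mul_comm]),
    hr'.trans (by rw [← hd, mul_comm]), hqr', hd₁, ?_, ?_⟩
  · exact Nat.coprime_of_dvd fun p hp h₂ h =>
      hp.ne_one (Nat.eq_one_of_dvd_coprimes hqr' (hd₂ p hp h₂) h)
  · exact Nat.coprime_of_dvd fun p hp h₁ h₂ =>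
      hp.ne_one (Nat.eq_one_of_dvd_coprimes hd₁ h₁ (hd₂ p hp h₂))

theorem Int.mul_mul_dvd_of_mul_eq_mul {q r d₁ d₂ x y : ℤ} (hq : q ≠ 0) (hqr : IsCoprime q r)
    (h₁ : IsCoprime d₁ q) (h₂ : IsCoprime d₂ r) (h₁₂ : IsCoprime d₁ d₂)
    (hxy : x * r = y * q) (hx : d₁ ∣ x) (hy : d₂ ∣ y) : d₁ * d₂ * q ∣ x := by
  obtain ⟨s, rfl⟩ : q ∣ x := hqr.dvd_of_dvd_mul_right ⟨y, by rw [hxy, mul_comm]⟩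
  obtain rfl : y = r * s := mul_right_cancel₀ hq (by rw [← hxy]; ring)
  have hs : d₁ * d₂ ∣ s := h₁₂.mul_dvd (h₁.dvd_of_dvd_mul_left hx) (h₂.dvd_of_dvd_mul_left hy)
  rw [mul_comm q s]
  exact mul_dvd_mul_right hs q

theorem Nat.Coprime.coprime_mod {a n : ℕ} (h : a.Coprime n) : n.Coprime (a % n) := by
  rw [Nat.Coprime, Nat.gcd_comm, ← Nat.gcd_rec]
  exact h.symm

theorem card_filter_mul_sub_mul_eq_le_totient (q r : ℕ) (c : ℤ) :
    #{p ∈ Icc 1 q ×ˢ Icc 1 r | p.1.Coprime q ∧ p.2.Coprime r ∧ (p.1 : ℤ) * r - p.2 * q = c}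
      ≤ (q.gcd r).totient := by
  rcases q.eq_zero_or_pos with rfl | hq
  · simp
  obtain ⟨d₁, d₂, q', r', hd, rfl, rfl, hqr', hd₁, hd₂, hd₁₂⟩ :=
    Nat.exists_gcd_eq_mul_coprime (r := r) hq.ne'
  have hd₁pos : 0 < d₁ := Nat.pos_of_mul_pos_right (Nat.pos_of_mul_pos_right hq)
  have hd₂pos : 0 < d₂ := Nat.pos_of_mul_pos_left (Nat.pos_of_mul_pos_right hq)
  have hq'pos : 0 < q' := Nat.pos_of_mul_pos_left hq
  rw [hd, Nat.totient_mul hd₁₂, Nat.totient, Nat.totient, ← card_product]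
  refine card_le_card_of_injOn (fun p => (p.1 % d₁, p.2 % d₂)) ?_ ?_
  · rintro ⟨a, b⟩ hab
    simp only [coe_filter, mem_product, Set.mem_ofPred_eq] at hab
    obtain ⟨-, ha, hb, -⟩ := hab
    simp only [coe_product, coe_filter, mem_range, Set.mem_prod, Set.mem_ofPred_eq]
    exact ⟨⟨Nat.mod_lt _ hd₁pos, (ha.coprime_dvd_right ⟨d₂ * q', by ring⟩).coprime_mod⟩,
      Nat.mod_lt _ hd₂pos, (hb.coprime_dvd_right ⟨d₁ * r', by ring⟩).coprime_mod⟩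
  · rintro ⟨a, b⟩ hab ⟨a', b'⟩ hab' heq
    simp only [coe_filter, mem_product, mem_Icc, Set.mem_ofPred_eq] at hab hab'
    simp only [Prod.mk.injEq] at heq
    obtain ⟨⟨⟨ha1, haq⟩, -⟩, -, -, hc⟩ := hab
    obtain ⟨⟨⟨ha1', haq'⟩, -⟩, -, -, hc'⟩ := hab'
    push_cast at hc hc'
    have hxy : ((a' : ℤ) - a) * r' = ((b' : ℤ) - b) * q' :=
      mul_left_cancel₀ (by positivity : ((d₁ : ℤ) * d₂) ≠ 0) (by linear_combination hc' - hc)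
    have hq_dvd : ((d₁ * d₂ * q' : ℕ) : ℤ) ∣ a' - a := by
      push_cast
      exact Int.mul_mul_dvd_of_mul_eq_mul (by positivity)
        (Nat.isCoprime_iff_coprime.mpr hqr')
        (Nat.isCoprime_iff_coprime.mpr hd₁) (Nat.isCoprime_iff_coprime.mpr hd₂)
        (Nat.isCoprime_iff_coprime.mpr hd₁₂) hxy (Nat.modEq_iff_dvd.mp heq.1)
        (Nat.modEq_iff_dvd.mp heq.2)
    obtain rfl : a = a' := by
      have := Int.eq_zero_of_abs_lt_dvd hq_dvd (by rw [abs_sub_lt_iff]; omega)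
      omega
    obtain rfl : b = b' := by
      have : ((b' : ℤ) - b) * (d₁ * d₂ * q') = 0 := by linear_combination hc - hc'
      have := (mul_eq_zero.mp this).resolve_right (by positivity)
      omega
    rfl

theorem Int.card_le_of_dvd_of_abs_sub_le {S : Finset ℤ} {d : ℕ} (hd : 0 < d) {t K : ℝ}
    (hK : 0 ≤ K) (hS : ∀ c ∈ S, (d : ℤ) ∣ c ∧ |(c : ℝ) - t| ≤ K) :
    (#S : ℝ) ≤ 2 * K / d + 1 := by
  have hdR : (0 : ℝ) < d := by exact_mod_cast hd
  set lo := ⌈(t - K) / d⌉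
  set hi := ⌊(t + K) / d⌋
  have hsub : S ⊆ (Icc lo hi).map ⟨(· * (d : ℤ)), mul_left_injective₀ (by positivity)⟩ := by
    intro c hc
    obtain ⟨⟨k, rfl⟩, hk⟩ := hS c hc
    rw [abs_sub_le_iff] at hk
    push_cast at hk
    simp only [mem_map, mem_Icc, Function.Embedding.coeFn_mk]
    refine ⟨k, ⟨Int.ceil_le.mpr ?_, Int.le_floor.mpr ?_⟩, mul_comm _ _⟩
    · rw [div_le_iff₀ hdR]; linarith
    · rw [le_div_iff₀ hdR]; linarith
  calc (#S : ℝ) ≤ ((hi + 1 - lo).toNat : ℝ) := by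
        rw [← Int.card_Icc]; exact_mod_cast (card_le_card hsub).trans_eq (card_map _)
    _ = max ((hi + 1 - lo : ℤ) : ℝ) 0 := by
        rw [← Int.cast_natCast, Int.toNat_eq_max]; push_cast; rfl
    _ ≤ 2 * K / d + 1 := by
        refine max_le ?_ (by positivity)
        have := Int.floor_le ((t + K) / d)
        have := Int.le_ceil ((t - K) / d)
        have : (t + K) / d - (t - K) / d = 2 * K / d := by ring
        push_cast
        linarith

theorem volume_Icc_inter_Icc_le (x x' ε ε' : ℝ) :
    volume (Set.Icc (x - ε) (x + ε) ∩ Set.Icc (x' - ε') (x' + ε')) ≤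
      ENNReal.ofReal (2 * min ε ε') := by
  rcases le_total ε ε' with h | h
  · calc _ ≤ volume (Set.Icc (x - ε) (x + ε)) := measure_mono Set.inter_subset_left
      _ = _ := by rw [Real.volume_Icc, min_eq_left h]; ring_nf
  · calc _ ≤ volume (Set.Icc (x' - ε') (x' + ε')) := measure_mono Set.inter_subset_right
      _ = _ := by rw [Real.volume_Icc, min_eq_right h]; ring_nf

theorem volume_biUnion_Icc_inter_biUnion_Icc_le {ι κ : Type*} (s : Finset ι) (t : Finset κ)
    (x : ι → ℝ) (x' : κ → ℝ) (ε ε' : ℝ) :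
    volume ((⋃ i ∈ s, Set.Icc (x i - ε) (x i + ε)) ∩ ⋃ j ∈ t, Set.Icc (x' j - ε') (x' j + ε')) ≤
      #{p ∈ s ×ˢ t | |x p.1 - x' p.2| ≤ ε + ε'} * ENNReal.ofReal (2 * min ε ε') := by
  set P := {p ∈ s ×ˢ t | |x p.1 - x' p.2| ≤ ε + ε'}
  calc _ ≤ volume (⋃ p ∈ P,
        Set.Icc (x p.1 - ε) (x p.1 + ε) ∩ Set.Icc (x' p.2 - ε') (x' p.2 + ε')) := by
        refine measure_mono fun u ⟨hu, hu'⟩ => ?_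
        simp only [Set.mem_iUnion] at hu hu'
        obtain ⟨i, hi, hui⟩ := hu
        obtain ⟨j, hj, huj⟩ := hu'
        have hij : (i, j) ∈ P := mem_filter.mpr ⟨mem_product.mpr ⟨hi, hj⟩, by
          rw [abs_sub_le_iff]; constructor <;> linarith [hui.1, hui.2, huj.1, huj.2]⟩
        exact Set.mem_biUnion hij ⟨hui, huj⟩
    _ ≤ ∑ p ∈ P, volume (Set.Icc (x p.1 - ε) (x p.1 + ε) ∩ Set.Icc (x' p.2 - ε') (x' p.2 + ε')) :=
        measure_biUnion_finset_le _ _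
    _ ≤ ∑ _p ∈ P, ENNReal.ofReal (2 * min ε ε') :=
        sum_le_sum fun p _ => volume_Icc_inter_Icc_le _ _ _ _
    _ = _ := by rw [sum_const, nsmul_eq_mul]

theorem Set.biUnion_iUnion_inter_subset_biUnion_filter {α ι : Type*} (s : Finset ι)
    (p : ι → Prop) [DecidablePred p] (f : ι → Set α) (u : Set α) :
    (⋃ i ∈ s, ⋃ (_ : p i), f i ∩ u) ⊆ ⋃ i ∈ s.filter p, f i :=
  Set.iUnion₂_subset fun _ hi => Set.iUnion_subset fun hpi =>
    Set.inter_subset_left.trans (Set.subset_biUnion_of_mem (u := f) (mem_filter.mpr ⟨hi, hpi⟩))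

theorem card_close_pairs_le {q r : ℕ} (hq : 0 < q) (hr : 0 < r) (y z : ℝ) {ε : ℝ} (hε : 0 ≤ ε) :
    (#{p ∈ {a ∈ Icc 1 q | a.Coprime q} ×ˢ {b ∈ Icc 1 r | b.Coprime r} |
        |((p.1 : ℝ) + y) / q - ((p.2 : ℝ) + z) / r| ≤ ε} : ℝ) ≤
      (q.gcd r).totient * (2 * (ε * q * r) / q.gcd r + 1) := by
  set P := {p ∈ {a ∈ Icc 1 q | a.Coprime q} ×ˢ {b ∈ Icc 1 r | b.Coprime r} |
    |((p.1 : ℝ) + y) / q - ((p.2 : ℝ) + z) / r| ≤ ε}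
  set f : ℕ × ℕ → ℤ := fun p => (p.1 : ℤ) * r - p.2 * q
  have hfiber : ∀ c ∈ P.image f, #{p ∈ P | f p = c} ≤ (q.gcd r).totient := by
    refine fun c _ => (card_le_card fun p hp => ?_).trans
      (card_filter_mul_sub_mul_eq_le_totient q r c)
    simp only [P, mem_filter, mem_product] at hp ⊢
    exact ⟨⟨hp.1.1.1.1, hp.1.1.2.1⟩, hp.1.1.1.2, hp.1.1.2.2, hp.2⟩
  have himage : (#(P.image f) : ℝ) ≤ 2 * (ε * q * r) / q.gcd r + 1 := by
    refine Int.card_le_of_dvd_of_abs_sub_le (t := z * q - y * r) (Nat.gcd_pos_of_pos_left r hq)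
      (by positivity) fun c hc => ?_
    obtain ⟨⟨a, b⟩, hp, rfl⟩ := mem_image.mp hc
    refine ⟨dvd_sub (dvd_mul_of_dvd_right (Int.natCast_dvd_natCast.mpr (Nat.gcd_dvd_right q r)) _)
      (dvd_mul_of_dvd_right (Int.natCast_dvd_natCast.mpr (Nat.gcd_dvd_left q r)) _), ?_⟩
    have hqr : (0 : ℝ) < q * r := by positivity
    calc |(((a : ℤ) * r - b * q : ℤ) : ℝ) - (z * q - y * r)|
        = |((a : ℝ) + y) / q - ((b : ℝ) + z) / r| * (q * r) := by
          rw [← abs_of_pos hqr, ← abs_mul]; congr 1; push_cast; field_simp; ring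
      _ ≤ ε * q * r := by
          rw [mul_assoc]; exact mul_le_mul_of_nonneg_right (mem_filter.mp hp).2 hqr.le
  calc (#P : ℝ) ≤ (q.gcd r).totient * #(P.image f) := by
        exact_mod_cast card_le_mul_card_image P _ hfiber
    _ ≤ _ := mul_le_mul_of_nonneg_left himage (by positivity)

theorem add_mul_min_le_two_mul {α : Type*} [CommRing α] [LinearOrder α] [IsStrictOrderedRing α]
    {a b : α} (ha : 0 ≤ a) (hb : 0 ≤ b) :
    (a + b) * min a b ≤ 2 * (a * b) := by
  rcases le_total a b with h | h
  · rw [min_eq_left h]; nlinarith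
  · rw [min_eq_right h]; nlinarith

theorem card_close_pairs_mul_two_min_le {q r : ℕ} (hq : 0 < q) (hr : 0 < r) (y z : ℝ) {a b : ℝ}
    (ha : 0 ≤ a) (hb : 0 ≤ b) :
    (#{p ∈ {i ∈ Icc 1 q | i.Coprime q} ×ˢ {j ∈ Icc 1 r | j.Coprime r} |
        |((p.1 : ℝ) + y) / q - ((p.2 : ℝ) + z) / r| ≤ a / q + b / r} : ℝ) *
        (2 * min (a / q) (b / r)) ≤ 8 * (a * b + a / q * (q.gcd r).totient) := by
  have hq' : (0 : ℝ) < q := by exact_mod_cast hq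
  have hr' : (0 : ℝ) < r := by exact_mod_cast hr
  have hd : (0 : ℝ) < q.gcd r := by exact_mod_cast Nat.gcd_pos_of_pos_left r hq
  have hφd : ((q.gcd r).totient : ℝ) / q.gcd r ≤ 1 :=
    div_le_one_of_le₀ (by exact_mod_cast Nat.totient_le _) hd.le
  have hmin : (a / q + b / r) * q * r * min (a / q) (b / r) ≤ 2 * (a * b) := by
    calc _ = (a / q + b / r) * min (a / q) (b / r) * (q * r) := by ring
      _ ≤ 2 * (a / q * (b / r)) * (q * r) :=
          mul_le_mul_of_nonneg_right (add_mul_min_le_two_mul (by positivity) (by positivity))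
            (by positivity)
      _ = _ := by field_simp
  calc _ ≤ (q.gcd r).totient * (2 * ((a / q + b / r) * q * r) / q.gcd r + 1) *
        (2 * min (a / q) (b / r)) :=
        mul_le_mul_of_nonneg_right (card_close_pairs_le hq hr y z (by positivity)) (by positivity)
    _ = 4 * ((q.gcd r).totient / q.gcd r) * ((a / q + b / r) * q * r * min (a / q) (b / r)) +
        2 * (q.gcd r).totient * min (a / q) (b / r) := by
        field_simp; ring
    _ ≤ 4 * 1 * (2 * (a * b)) + 2 * (q.gcd r).totient * (a / q) := by
        gcongr
        exact min_le_left _ _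
    _ ≤ _ := by nlinarith [mul_nonneg (div_nonneg ha hq'.le) (q.gcd r).totient.cast_nonneg (α := ℝ)]

theorem stmt16 :
    ∃ C : ℝ, 0 < C ∧ ∀ (ψ : ℕ → ℝ), (∀ q, 0 ≤ ψ q) → ∀ (q r : ℕ), 1 ≤ r → r < q →
      ∀ (y z : ℝ),
        volume ((⋃ a ∈ Finset.Icc 1 q, ⋃ (_ : Nat.gcd a q = 1),
            (Set.Icc (((a : ℝ) + y) / q - ψ q / q) (((a : ℝ) + y) / q + ψ q / q)
              ∩ Set.Ico (0 : ℝ) 1)) ∩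
          (⋃ b ∈ Finset.Icc 1 r, ⋃ (_ : Nat.gcd b r = 1),
            (Set.Icc (((b : ℝ) + z) / r - ψ r / r) (((b : ℝ) + z) / r + ψ r / r)
              ∩ Set.Ico (0 : ℝ) 1))) ≤
        ENNReal.ofReal (C * (ψ q * ψ r + ψ q / q * Nat.totient (Nat.gcd q r))) := by
  refine ⟨8, by norm_num, fun ψ hψ q r hr hrq y z => ?_⟩
  calc _ ≤ volume (_ ∩ _) := measure_mono (Set.inter_subset_inter
        (Set.biUnion_iUnion_inter_subset_biUnion_filter _ _ _ _)
        (Set.biUnion_iUnion_inter_subset_biUnion_filter _ _ _ _))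
    _ ≤ _ := volume_biUnion_Icc_inter_biUnion_Icc_le _ _ _ _ _ _
    _ ≤ _ := by
      rw [← ENNReal.ofReal_natCast, ← ENNReal.ofReal_mul (by positivity)]
      exact ENNReal.ofReal_le_ofReal
        (card_close_pairs_mul_two_min_le (by omega) hr y z (hψ q) (hψ r))
end

section
/- For integers 1 ≤ r < q, real Δ > 0, and any real interval I of length 2Δqr, the number of pairs (a,b) with 1 ≤ a ≤ q, 1 ≤ b ≤ r, gcd(a,q)=1, gcd(b,r)=1, and ar − bq ∈ I is at most (2Δqr/gcd(q,r) + 1) · φ(gcd(q,r)). -/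
/-! Write `q = q' g` and `r = r' g` with `g = gcd q r` and `q', r'` coprime. Since
`a r - b q = g (a r' - b q')`, the integer `a r' - b q'` takes at most `2Δqr/g + 1` values. For a
fixed value `c`, reduction modulo `g` sends an admissible pair `(a, b)` to a pair of units `(x, y)`
of `ZMod g` on the line `r' x - q' y = c`, injectively because `a` is then determined modulo
`q' g = q`. A line `u x + v y = c` with `u, v` coprime carries at most `φ g` points with unit
coordinates: over a local ring one of `u, v` is a unit, so one coordinate determines the other,
and the Chinese remainder theorem reduces `ZMod g` to prime powers. -/

open Finset

section UnitsOnLine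

variable {R S R₁ R₂ : Type*} [CommRing R] [CommRing S] [CommRing R₁] [CommRing R₂]

def unitsOnLine (u v c : R) : Set (Rˣ × Rˣ) := {p | u * p.1 + v * p.2 = c}

theorem card_unitsOnLine_comm (u v c : R) :
    Nat.card (unitsOnLine u v c) = Nat.card (unitsOnLine v u c) :=
  Nat.card_congr <| (Equiv.prodComm _ _).subtypeEquiv fun p => by
    simp only [unitsOnLine, Set.mem_ofPred_eq, Equiv.prodComm_apply, Prod.fst_swap,
      Prod.snd_swap, add_comm]

theorem card_unitsOnLine_le_of_isUnit_left [Finite R] {u : R} (hu : IsUnit u) (v c : R) :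
    Nat.card (unitsOnLine u v c) ≤ Nat.card Rˣ := by
  refine Nat.card_le_card_of_injective (fun p => p.1.2) ?_
  rintro ⟨⟨x, y⟩, hp⟩ ⟨⟨x', y'⟩, hp'⟩ (rfl : y = y')
  have : u * x = u * x' := by
    simp only [unitsOnLine, Set.mem_ofPred_eq] at hp hp'
    linear_combination hp - hp'
  obtain rfl := Units.ext (hu.mul_left_cancel this)
  rfl

theorem IsCoprime.isUnit_or_isUnit [IsLocalRing R] {u v : R} (h : IsCoprime u v) :
    IsUnit u ∨ IsUnit v :=
  let ⟨_, _, h⟩ := h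
  (IsLocalRing.isUnit_or_isUnit_of_add_one h).imp isUnit_of_mul_isUnit_right
    isUnit_of_mul_isUnit_right

theorem card_unitsOnLine_le_of_isLocalRing [IsLocalRing R] [Finite R] {u v : R}
    (h : IsCoprime u v) (c : R) : Nat.card (unitsOnLine u v c) ≤ Nat.card Rˣ := by
  rcases h.isUnit_or_isUnit with hu | hv
  · exact card_unitsOnLine_le_of_isUnit_left hu v c
  · exact card_unitsOnLine_comm u v c ▸ card_unitsOnLine_le_of_isUnit_left hv u c

theorem card_unitsOnLine_map (e : R ≃+* S) (u v c : R) :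
    Nat.card (unitsOnLine (e u) (e v) (e c)) = Nat.card (unitsOnLine u v c) := by
  let f : Rˣ ≃ Sˣ := (Units.mapEquiv e.toMulEquiv).toEquiv
  refine (Nat.card_congr <| (f.prodCongr f).subtypeEquiv fun p => ?_).symm
  change _ ↔ e u * e p.1 + e v * e p.2 = e c
  rw [← map_mul, ← map_mul, ← map_add, e.injective.eq_iff]
  rfl

theorem card_unitsOnLine_prod (u v c : R₁ × R₂) :
    Nat.card (unitsOnLine u v c) =
      Nat.card (unitsOnLine u.1 v.1 c.1) * Nat.card (unitsOnLine u.2 v.2 c.2) := by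
  let f : (R₁ × R₂)ˣ ≃ R₁ˣ × R₂ˣ := MulEquiv.prodUnits.toEquiv
  rw [← Nat.card_prod]
  refine Nat.card_congr <|
    (((f.prodCongr f).trans (Equiv.prodProdProdComm _ _ _ _)).subtypeEquiv fun p => ?_).trans
      Equiv.subtypeProdEquivProd
  simp only [unitsOnLine, Set.mem_ofPred_eq, Prod.ext_iff, Prod.fst_add, Prod.snd_add,
    Prod.fst_mul, Prod.snd_mul]
  rfl

end UnitsOnLine

open Nat in
theorem ZMod.card_unitsOnLine_le_totient {n : ℕ} (hn : n ≠ 0) {u v : ZMod n}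
    (h : IsCoprime u v) (c : ZMod n) : Nat.card (unitsOnLine u v c) ≤ φ n := by
  induction n using Nat.recOnPosPrimePosCoprime with
  | zero => exact absurd rfl hn
  | one =>
    simpa using Finite.card_le_one_iff_subsingleton.2
      (inferInstance : Subsingleton (unitsOnLine u v c))
  | prime_pow p k hp hk =>
    have : Fact p.Prime := ⟨hp⟩
    have : Fact (1 < p ^ k) := ⟨Nat.one_lt_pow hk.ne' hp.one_lt⟩
    -- `ZMod (p ^ k)` is local as a quotient of the local ring `ℤ_[p]`.
    have : IsLocalRing (ZMod (p ^ k)) :=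
      IsLocalRing.of_surjective' (PadicInt.toZModPow k) (ZMod.ringHom_surjective _)
    calc Nat.card (unitsOnLine u v c) ≤ Nat.card (ZMod (p ^ k))ˣ :=
          card_unitsOnLine_le_of_isLocalRing h c
      _ = φ (p ^ k) := by rw [Nat.card_eq_fintype_card, ZMod.card_units_eq_totient]
  | coprime a b ha hb hab iha ihb =>
    let e := ZMod.chineseRemainder hab
    have he := h.map e.toRingHom
    rw [← card_unitsOnLine_map e, card_unitsOnLine_prod, Nat.totient_mul hab]
    exact Nat.mul_le_mul (iha (by omega) (he.map (RingHom.fst _ _)) _)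
      (ihb (by omega) (he.map (RingHom.snd _ _)) _)

theorem IsCoprime.mul_dvd_of_mul_eq_mul {R : Type*} [CommRing R] {u v d e g : R}
    (huv : IsCoprime u v) (h : d * v = e * u) (hd : g ∣ d) (he : g ∣ e) : u * g ∣ d := by
  obtain ⟨x, y, hxy⟩ := huv
  obtain ⟨d', rfl⟩ := hd
  obtain ⟨e', rfl⟩ := he
  exact ⟨x * d' + y * e', by linear_combination (-(g * d')) * hxy + y * h⟩

open Nat in
theorem card_filter_coprime_sub_eq_le_totient {q r g : ℕ} (hqr : q.Coprime r) (c : ℤ) :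
    #{ab ∈ Icc 1 (q * g) ×ˢ Icc 1 (r * g) | Nat.gcd ab.1 (q * g) = 1 ∧
      Nat.gcd ab.2 (r * g) = 1 ∧ (ab.1 * r - ab.2 * q : ℤ) = c} ≤ φ g := by
  rcases Nat.eq_zero_or_pos g with rfl | hg
  · simp
  have : NeZero g := ⟨hg.ne'⟩
  set F := {ab ∈ Icc 1 (q * g) ×ˢ Icc 1 (r * g) | Nat.gcd ab.1 (q * g) = 1 ∧
      Nat.gcd ab.2 (r * g) = 1 ∧ (ab.1 * r - ab.2 * q : ℤ) = c}
  have hunit {m k : ℕ} (hm : Nat.gcd m (k * g) = 1) : IsUnit (m : ZMod g) :=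
    (ZMod.isUnit_iff_coprime m g).2 (Nat.Coprime.coprime_dvd_right (dvd_mul_left g k) hm)
  have hline (ab : F) : ((hunit (mem_filter.1 ab.2).2.1).unit,
      (hunit (mem_filter.1 ab.2).2.2.1).unit) ∈ unitsOnLine (r : ZMod g) (-q) c := by
    simp only [unitsOnLine, Set.mem_ofPred_eq, IsUnit.unit_spec, neg_mul,
      ← (mem_filter.1 ab.2).2.2.2, Int.cast_sub, Int.cast_mul, Int.cast_natCast]
    ring
  have hinj : Function.Injective
      fun ab : F => (⟨_, hline ab⟩ : unitsOnLine (r : ZMod g) (-q) c) := by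
    rintro ⟨⟨a, b⟩, hab⟩ ⟨⟨a', b'⟩, hab'⟩ h
    simp only [F, mem_filter, mem_product, mem_Icc] at hab hab'
    have hmod (x y : ℕ) (hxy : (x : ZMod g) = y) : (g : ℤ) ∣ y - x :=
      Nat.modEq_iff_dvd.1 ((ZMod.natCast_eq_natCast_iff _ _ _).1 hxy)
    have hga := hmod a a' (congrArg (fun p => (p.1.1 : ZMod g)) h)
    have hgb := hmod b b' (congrArg (fun p => (p.1.2 : ZMod g)) h)
    have hdvd : (q : ℤ) * g ∣ a' - a :=
      (Nat.isCoprime_iff_coprime.2 hqr).mul_dvd_of_mul_eq_mul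
        (by linear_combination hab'.2.2.2 - hab.2.2.2) hga hgb
    have ha : (a : ℤ) = a' := by
      have := Int.eq_zero_of_abs_lt_dvd hdvd (by rw [abs_lt]; omega)
      omega
    have hb : (b : ℤ) = b' := by
      have hq : q ≠ 0 := by rintro rfl; omega
      exact mul_right_cancel₀ (Int.natCast_ne_zero.2 hq)
        (by linear_combination hab'.2.2.2 - hab.2.2.2 + r * ha)
    exact Subtype.ext (Prod.ext (by exact_mod_cast ha) (by exact_mod_cast hb))
  have hco : IsCoprime (r : ZMod g) (-q) := by
    simpa using (Nat.isCoprime_iff_coprime.2 hqr).symm.neg_right.map (Int.castRingHom (ZMod g))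
  calc #F = Nat.card F := (Nat.card_eq_finsetCard F).symm
    _ ≤ Nat.card (unitsOnLine (r : ZMod g) (-q) c) := Nat.card_le_card_of_injective _ hinj
    _ ≤ φ g := ZMod.card_unitsOnLine_le_totient hg.ne' hco c

theorem card_le_of_forall_mul_mem_Icc {s : Finset ℤ} {g x l : ℝ} (hg : 0 < g) (hl : 0 ≤ l)
    (h : ∀ c ∈ s, g * c ∈ Set.Icc x (x + l)) : (#s : ℝ) ≤ l / g + 1 := by
  have hsub : s ⊆ Icc ⌈x / g⌉ ⌊(x + l) / g⌋ := fun c hc => by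
    obtain ⟨hlo, hhi⟩ := h c hc
    rw [mem_Icc, Int.ceil_le, Int.le_floor, div_le_iff₀' hg, le_div_iff₀' hg]
    exact ⟨hlo, hhi⟩
  calc (#s : ℝ) ≤ ((⌊(x + l) / g⌋ + 1 - ⌈x / g⌉).toNat : ℤ) := by
        exact_mod_cast Int.card_Icc _ _ ▸ card_le_card hsub
    _ ≤ l / g + 1 := by
        rw [Int.toNat_eq_max, Int.cast_max]
        refine max_le ?_ (by rw [Int.cast_zero]; positivity)
        push_cast
        linarith [Int.floor_le ((x + l) / g), Int.le_ceil (x / g), add_div x l g]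

theorem stmt17_general (q r : ℕ) (hr : 1 ≤ r) (Δ : ℝ) (hΔ : 0 < Δ) (X : ℝ) :
    ((((Finset.Icc 1 q) ×ˢ (Finset.Icc 1 r)).filter (fun ab : ℕ × ℕ =>
        Nat.gcd ab.1 q = 1 ∧ Nat.gcd ab.2 r = 1 ∧
        ((ab.1 * r : ℕ) : ℝ) - ((ab.2 * q : ℕ) : ℝ) ∈ Set.Icc X (X + 2 * Δ * q * r))).card : ℝ)
      ≤ (2 * Δ * q * r / (Nat.gcd q r : ℝ) + 1) * (Nat.totient (Nat.gcd q r) : ℝ) := by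
  have hg : 0 < Nat.gcd q r := Nat.gcd_pos_of_pos_right q hr
  obtain ⟨q', r', hqr, hq, hr'⟩ := Nat.exists_coprime q r
  generalize Nat.gcd q r = g at hg hq hr' ⊢
  subst hq hr'
  set T := ((Icc 1 (q' * g)) ×ˢ (Icc 1 (r' * g))).filter (fun ab : ℕ × ℕ =>
    Nat.gcd ab.1 (q' * g) = 1 ∧ Nat.gcd ab.2 (r' * g) = 1 ∧
    ((ab.1 * (r' * g) : ℕ) : ℝ) - ((ab.2 * (q' * g) : ℕ) : ℝ) ∈
      Set.Icc X (X + 2 * Δ * (q' * g : ℕ) * (r' * g : ℕ)))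
  let f (ab : ℕ × ℕ) : ℤ := ab.1 * r' - ab.2 * q'
  have hfiber (c : ℤ) (_ : c ∈ T.image f) : #{ab ∈ T | f ab = c} ≤ g.totient :=
    (card_le_card fun ab => by simp only [T, f, mem_filter]; tauto).trans
      (card_filter_coprime_sub_eq_le_totient hqr c)
  have himage : (#(T.image f) : ℝ) ≤ 2 * Δ * (q' * g : ℕ) * (r' * g : ℕ) / g + 1 := by
    refine card_le_of_forall_mul_mem_Icc (x := X) (by exact_mod_cast hg) (by positivity) ?_
    simp only [T, f, mem_image, mem_filter]
    rintro _ ⟨ab, ⟨-, -, -, hab⟩, rfl⟩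
    convert hab using 1
    push_cast
    ring
  calc (#T : ℝ) ≤ g.totient * #(T.image f) := by
        exact_mod_cast card_le_mul_card_image T _ hfiber
    _ ≤ g.totient * (2 * Δ * (q' * g : ℕ) * (r' * g : ℕ) / g + 1) := by gcongr
    _ = _ := mul_comm _ _

theorem stmt17 (q r : ℕ) (hr : 1 ≤ r) (hrq : r < q) (Δ : ℝ) (hΔ : 0 < Δ) (X : ℝ) :
    ((((Finset.Icc 1 q) ×ˢ (Finset.Icc 1 r)).filter (fun ab : ℕ × ℕ =>
        Nat.gcd ab.1 q = 1 ∧ Nat.gcd ab.2 r = 1 ∧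
        ((ab.1 * r : ℕ) : ℝ) - ((ab.2 * q : ℕ) : ℝ) ∈ Set.Icc X (X + 2 * Δ * q * r))).card : ℝ)
      ≤ (2 * Δ * q * r / (Nat.gcd q r : ℝ) + 1) * (Nat.totient (Nat.gcd q r) : ℝ) :=
  stmt17_general q r hr Δ hΔ X
end
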